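/- arXiv:math/0209275 — 8 statements merged into one kernel-verified Lean document; each statement's English description precedes it below -/
import Mathlib

section
/- Let R be a commutative ring of characteristic p > 0 and let M and N be R-modules. If θ : M → N is an additive (ℤ-linear) differential operator of order ≤ n, i.e. θ ∈ D^n_ℤ(M,N), then for every power q = p^e with q > n, θ is R^q-linear: θ(r^q · m) = r^q · θ(m) for all r ∈ R and m ∈ M. -/
/-- `IsDiffOpOfOrder R n f` : the map `f : M → N` is a differential operator of order at most
`n` relative to `R`, in the inductive sense. -/
def IsDiffOpOfOrder (R : Type*) [CommRing R] {M N : Type*} [AddCommGroup M] [Module R M]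
    [AddCommGroup N] [Module R N] : ℕ → (M → N) → Prop
  | 0, f => ∀ (r : R) (m : M), f (r • m) = r • f m
  | n + 1, f => ∀ r : R, IsDiffOpOfOrder R n (fun m => r • f m - f (r • m))

/-!
The bracket `[r, -] : f ↦ r • f - f ∘ (r • ·)` is the difference of two commuting operators on
`M → N`: left multiplication by `r`, which is the central element `algebraMap r` of the
`R`-algebra `Module.End R (M → N)`, and precomposition with `r • ·`. An operator of order `≤ n`
is killed by `[r, -] ^ (n + 1)`, hence by `[r, -] ^ q` for `q = p ^ e > n`. In characteristic `p`
the binomial expansion of `[r, -] ^ q` collapses to `f ↦ r ^ q • f - f ∘ (r ^ q • ·)`, which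
gives the claim.
-/

open Polynomial

section Bracket

variable {R : Type*} [CommRing R] {M N : Type*} [AddCommGroup M] [Module R M]
    [AddCommGroup N] [Module R N]

def smulBracket (r : R) : Module.End R (M → N) :=
  algebraMap R _ r - LinearMap.funLeft R N (r • · : M → M)

lemma funLeft_smul_pow_apply (r : R) (k : ℕ) (f : M → N) (m : M) :
    (LinearMap.funLeft R N (r • · : M → M) ^ k) f m = f (r ^ k • m) := by
  induction k generalizing f with
  | zero => simp
  | succ k ih =>
    rw [pow_succ, Module.End.mul_apply, ih, LinearMap.funLeft_apply, smul_smul, ← pow_succ']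

lemma IsDiffOpOfOrder.smulBracket_pow_apply_eq_zero {n : ℕ} {f : M → N}
    (hf : IsDiffOpOfOrder R n f) (r : R) : (smulBracket r ^ (n + 1)) f = 0 := by
  induction n generalizing f with
  | zero =>
    funext m
    exact sub_eq_zero.mpr (hf r m).symm
  | succ n ih => rw [pow_succ, Module.End.mul_apply]; exact ih (hf r)

end Bracket

-- `A` itself need not have characteristic `p` (it may be trivial), so the identity is pulled back
-- from `R[X]` along `aeval a`.
lemma algebraMap_sub_pow_char_pow {R A : Type*} [CommRing R] [Ring A] [Algebra R A]
    (p : ℕ) [Fact p.Prime] [CharP R p] (e : ℕ) (r : R) (a : A) :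
    (algebraMap R A r - a) ^ p ^ e = algebraMap R A (r ^ p ^ e) - a ^ p ^ e := by
  simpa using congrArg (aeval a) (sub_pow_char_pow (C r) X e)

lemma IsDiffOpOfOrder.smul_pow_char_pow {p : ℕ} [Fact p.Prime] {R : Type*} [CommRing R]
    [CharP R p] {M N : Type*} [AddCommGroup M] [Module R M] [AddCommGroup N] [Module R N]
    {n : ℕ} {f : M → N} (hf : IsDiffOpOfOrder R n f) {e : ℕ} (hq : n < p ^ e) (r : R) (m : M) :
    f (r ^ p ^ e • m) = r ^ p ^ e • f m := by
  have hvanish : (smulBracket r ^ p ^ e) f = 0 :=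
    Module.End.pow_map_zero_of_le hq (hf.smulBracket_pow_apply_eq_zero r)
  rw [smulBracket, algebraMap_sub_pow_char_pow] at hvanish
  have := congrFun hvanish m
  rw [LinearMap.sub_apply, Pi.sub_apply, funLeft_smul_pow_apply] at this
  exact (sub_eq_zero.mp this).symm

/-- **Proposition.** Over a commutative ring `R` of characteristic `p > 0`, an additive
differential operator `θ : M → N` of order `≤ n` is `R^q`-linear for every `q = p^e > n`. -/
theorem frobLinear_of_isDiffOpOfOrder
    (p : ℕ) (hp : p.Prime) (R : Type*) [CommRing R] [CharP R p]
    {M N : Type*} [AddCommGroup M] [Module R M] [AddCommGroup N] [Module R N]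
    (θ : M →+ N) (n : ℕ) (hθ : IsDiffOpOfOrder R n ⇑θ)
    (e : ℕ) (hq : n < p ^ e) :
    ∀ (r : R) (m : M), θ (r ^ p ^ e • m) = r ^ p ^ e • θ m := by
  have := Fact.mk hp
  exact hθ.smul_pow_char_pow hq
end

section
/- Let R be a commutative ring of characteristic p > 0 that is generated as an algebra over its subring R^p of p-th powers by d elements x_1, …, x_d, and let M and N be R-modules. Then for every e ≥ 0 and q = p^e, every R^q-linear map θ : M → N is an additive (ℤ-linear) differential operator of order at most d·q; that is, Hom_{R^q}(M,N) ⊆ D^{dq}_ℤ(M,N). -/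
section Aux

variable {R : Type*} [CommRing R] {M N : Type*} [AddCommGroup M] [Module R M]
  [AddCommGroup N] [Module R N]

/-- The commutator bracket of a scalar with a raw map. -/
def brkt (r : R) (f : M → N) : M → N := fun m => r • f m - f (r • m)

lemma isDiffOpOfOrder_succ {n : ℕ} {f : M → N} :
    IsDiffOpOfOrder R (n + 1) f ↔ ∀ r : R, IsDiffOpOfOrder R n (brkt r f) := Iff.rfl

lemma isDiffOpOfOrder_zero {f : M → N} :
    IsDiffOpOfOrder R 0 f ↔ ∀ r : R, brkt r f = 0 := by
  show (∀ (r : R) (m : M), f (r • m) = r • f m) ↔ _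
  constructor
  · intro h r; funext m; simp [brkt, h r m]
  · intro h r m
    have := congrFun (h r) m
    simp only [brkt, Pi.zero_apply, sub_eq_zero] at this
    exact this.symm

lemma brkt_zero_fun (r : R) : brkt r (0 : M → N) = 0 := by
  funext m; simp [brkt]

lemma brkt_comm (r s : R) (f : M → N) : brkt r (brkt s f) = brkt s (brkt r f) := by
  funext m
  simp only [brkt, smul_sub, smul_smul, mul_comm r s]
  abel

lemma brkt_add_fun (r : R) (f g : M → N) :
    brkt r (fun m => f m + g m) = fun m => brkt r f m + brkt r g m := by
  funext m; simp only [brkt, smul_add]; abel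

lemma brkt_neg_fun (r : R) (f : M → N) :
    brkt r (fun m => -(f m)) = fun m => -(brkt r f m) := by
  funext m; simp only [brkt, smul_neg]; abel

lemma brkt_smul_left (r s : R) (f : M → N) :
    brkt r (fun m => s • f m) = fun m => s • brkt r f m := by
  funext m
  simp only [brkt, smul_sub, smul_smul, mul_comm r s]

lemma brkt_precomp (r s : R) (f : M → N) :
    brkt r (fun m => f (s • m)) = fun m => brkt r f (s • m) := by
  funext m
  simp only [brkt, smul_comm r s]

lemma additive.zero {f : M → N} (hf : ∀ a b, f (a + b) = f a + f b) : f 0 = 0 := by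
  have := hf 0 0
  simpa using this.symm

lemma additive.neg {f : M → N} (hf : ∀ a b, f (a + b) = f a + f b) (a : M) :
    f (-a) = -(f a) := by
  have h := hf (-a) a
  rw [neg_add_cancel, additive.zero hf] at h
  exact eq_neg_of_add_eq_zero_left h.symm

lemma brkt_additive {f : M → N} (hf : ∀ a b, f (a + b) = f a + f b) (r : R) :
    ∀ a b, brkt r f (a + b) = brkt r f a + brkt r f b := by
  intro a b
  simp only [brkt, smul_add, hf]
  abel

lemma brkt_zero_left {f : M → N} (hf : ∀ a b, f (a + b) = f a + f b) :
    brkt (0 : R) f = 0 := by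
  funext m; simp [brkt, additive.zero hf]

lemma brkt_one_left {f : M → N} : brkt (1 : R) f = 0 := by
  funext m; simp [brkt]

lemma brkt_add_left {f : M → N} (hf : ∀ a b, f (a + b) = f a + f b) (a b : R) :
    brkt (a + b) f = fun m => brkt a f m + brkt b f m := by
  funext m
  simp only [brkt, add_smul, hf]
  abel

lemma brkt_neg_left {f : M → N} (hf : ∀ a b, f (a + b) = f a + f b) (a : R) :
    brkt (-a) f = fun m => -(brkt a f m) := by
  funext m
  simp only [brkt, neg_smul, additive.neg hf]
  abel

lemma brkt_mul_left (a b : R) (f : M → N) :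
    brkt (a * b) f = fun m => a • brkt b f m + brkt a f (b • m) := by
  funext m
  simp only [brkt, mul_smul, smul_sub]
  abel

lemma diffOp_zero (n : ℕ) : IsDiffOpOfOrder R n (0 : M → N) := by
  induction n with
  | zero => exact isDiffOpOfOrder_zero.2 fun r => brkt_zero_fun r
  | succ n ih =>
    rw [isDiffOpOfOrder_succ]
    intro r
    rw [brkt_zero_fun]
    exact ih

lemma diffOp_add {n : ℕ} : ∀ {f g : M → N}, IsDiffOpOfOrder R n f → IsDiffOpOfOrder R n g →
    IsDiffOpOfOrder R n (fun m => f m + g m) := by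
  induction n with
  | zero =>
    intro f g hf hg
    rw [isDiffOpOfOrder_zero] at *
    intro r
    rw [brkt_add_fun, hf r, hg r]
    funext m; simp
  | succ n ih =>
    intro f g hf hg
    rw [isDiffOpOfOrder_succ] at *
    intro r
    rw [brkt_add_fun]
    exact ih (hf r) (hg r)

lemma diffOp_neg {n : ℕ} : ∀ {f : M → N}, IsDiffOpOfOrder R n f →
    IsDiffOpOfOrder R n (fun m => -(f m)) := by
  induction n with
  | zero =>
    intro f hf
    rw [isDiffOpOfOrder_zero] at *
    intro r
    rw [brkt_neg_fun, hf r]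
    funext m; simp
  | succ n ih =>
    intro f hf
    rw [isDiffOpOfOrder_succ] at *
    intro r
    rw [brkt_neg_fun]
    exact ih (hf r)

lemma diffOp_smul_left {n : ℕ} (s : R) : ∀ {f : M → N}, IsDiffOpOfOrder R n f →
    IsDiffOpOfOrder R n (fun m => s • f m) := by
  induction n with
  | zero =>
    intro f hf
    rw [isDiffOpOfOrder_zero] at *
    intro r
    rw [brkt_smul_left, hf r]
    funext m; simp
  | succ n ih =>
    intro f hf
    rw [isDiffOpOfOrder_succ] at *
    intro r
    rw [brkt_smul_left]
    exact ih (hf r)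

lemma diffOp_precomp {n : ℕ} (s : R) : ∀ {f : M → N}, IsDiffOpOfOrder R n f →
    IsDiffOpOfOrder R n (fun m => f (s • m)) := by
  induction n with
  | zero =>
    intro f hf
    rw [isDiffOpOfOrder_zero] at *
    intro r
    rw [brkt_precomp, hf r]
    funext m; simp
  | succ n ih =>
    intro f hf
    rw [isDiffOpOfOrder_succ] at *
    intro r
    rw [brkt_precomp]
    exact ih (hf r)

/-! ### Operator algebra: the bracket as `L - R` in `AddMonoid.End (M → N)` -/

/-- Left multiplication operator. -/
def Lop (r : R) : AddMonoid.End (M → N) :=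
  AddMonoidHom.mk' (fun f m => r • f m) (by
    intro f g; funext m; simp [smul_add])

/-- Right multiplication (precomposition) operator. -/
def Rop (r : R) : AddMonoid.End (M → N) :=
  AddMonoidHom.mk' (fun f m => f (r • m)) (by
    intro f g; funext m; simp)

lemma Lop_pow (r : R) (n : ℕ) : (Lop r : AddMonoid.End (M → N)) ^ n = Lop (r ^ n) := by
  induction n with
  | zero =>
    refine AddMonoidHom.ext fun f => funext fun m => ?_
    show f m = (r ^ 0) • f m
    simp
  | succ n ih =>
    rw [pow_succ, ih]
    refine AddMonoidHom.ext fun f => funext fun m => ?_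
    show (r ^ n) • (r • f m) = (r ^ (n + 1)) • f m
    rw [smul_smul, ← pow_succ]

lemma Rop_pow (r : R) (n : ℕ) : (Rop r : AddMonoid.End (M → N)) ^ n = Rop (r ^ n) := by
  induction n with
  | zero =>
    refine AddMonoidHom.ext fun f => funext fun m => ?_
    show f m = f ((r ^ 0) • m)
    simp
  | succ n ih =>
    rw [pow_succ, ih]
    refine AddMonoidHom.ext fun f => funext fun m => ?_
    show f (r • (r ^ n) • m) = f ((r ^ (n + 1)) • m)
    rw [smul_smul, ← pow_succ']

lemma Lop_Rop_commute (r : R) :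
    Commute (Lop r : AddMonoid.End (M → N)) (Rop r) := by
  show _ * _ = _ * _
  refine AddMonoidHom.ext fun f => funext fun m => ?_
  rfl

lemma sub_Lop_Rop_apply (r : R) (f : M → N) :
    ((Lop r - Rop r : AddMonoid.End (M → N))) f = brkt r f := by
  funext m
  show (Lop r f - Rop r f) m = _
  rfl

lemma brkt_iterate_eq (r : R) (n : ℕ) (f : M → N) :
    (brkt r)^[n] f = ((Lop r - Rop r : AddMonoid.End (M → N)) ^ n) f := by
  induction n generalizing f with
  | zero => simp
  | succ n ih =>
    rw [Function.iterate_succ_apply', ih, pow_succ']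
    exact (sub_Lop_Rop_apply r _).symm

lemma brkt_iterate_prime_pow (p : ℕ) (hp : p.Prime) [CharP R p] (e : ℕ) (r : R) (f : M → N) :
    (brkt r)^[p ^ e] f = brkt (r ^ p ^ e) f := by
  have hsmul : ∀ v : N, p • v = 0 := by
    intro v
    rw [← Nat.cast_smul_eq_nsmul R, CharP.cast_eq_zero, zero_smul]
  have hpA : (p : AddMonoid.End (M → N)) = 0 := by
    refine AddMonoidHom.ext fun f => funext fun m => ?_
    erw [AddMonoid.End.natCast_apply]
    show (p • f) m = (0 : M → N) m
    simp only [Pi.smul_apply, Pi.zero_apply]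
    exact hsmul _
  rcases subsingleton_or_nontrivial (AddMonoid.End (M → N)) with hs | hn
  · have hMN : ∀ g : M → N, g = 0 := by
      intro g
      calc g = (1 : AddMonoid.End (M → N)) g := rfl
        _ = (0 : AddMonoid.End (M → N)) g := by rw [Subsingleton.elim (1 : AddMonoid.End (M → N)) 0]
        _ = 0 := rfl
    rw [hMN ((brkt r)^[p ^ e] f), hMN (brkt (r ^ p ^ e) f)]
  · haveI := Fact.mk hp
    haveI : CharP (AddMonoid.End (M → N)) p := (CharP.charP_iff_prime_eq_zero hp).2 hpA
    rw [brkt_iterate_eq, sub_pow_char_pow_of_commute _ _ (Lop_Rop_commute r),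
      Lop_pow, Rop_pow, sub_Lop_Rop_apply]

lemma foldr_brkt_replicate (r : R) (n : ℕ) (f : M → N) :
    (List.replicate n r).foldr brkt f = (brkt r)^[n] f := by
  induction n with
  | zero => rfl
  | succ n ih => rw [List.replicate_succ, List.foldr_cons, ih, Function.iterate_succ_apply']

lemma H1_foldr (q : ℕ) : ∀ (L : List R) (f : M → N),
    (∀ y : R, brkt (y ^ q) f = 0) → ∀ y : R, brkt (y ^ q) (L.foldr brkt f) = 0 := by
  intro L
  induction L with
  | nil => intro f hf y; exact hf y
  | cons a t ih =>
    intro f hf y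
    show brkt (y ^ q) (brkt a (t.foldr brkt f)) = 0
    rw [brkt_comm, ih f hf y, brkt_zero_fun]

/-! ### The main induction -/

lemma main_induction (q : ℕ) (d : ℕ) (x : Fin d → R)
    (hgen : ∀ y : R, y ∈ Subring.closure ((Set.range fun r : R => r ^ q) ∪ Set.range x)) :
    ∀ (n : ℕ) (f : M → N), (∀ a b, f (a + b) = f a + f b) →
      (∀ y : R, brkt (y ^ q) f = 0) →
      (∀ l : List (Fin d), n + 1 ≤ l.length → (l.map x).foldr brkt f = 0) →
      IsDiffOpOfOrder R n f := by
  intro n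
  induction n with
  | zero =>
    intro f hf h1 hl
    rw [isDiffOpOfOrder_zero]
    intro r
    induction hgen r using Subring.closure_induction with
    | mem z hz =>
      rcases hz with ⟨s, rfl⟩ | ⟨i, rfl⟩
      · exact h1 s
      · have := hl [i] (by simp)
        simpa using this
    | zero => exact brkt_zero_left hf
    | one => exact brkt_one_left
    | add a b _ _ ha hb =>
      rw [brkt_add_left hf, ha, hb]
      funext m; simp
    | neg a _ ha =>
      rw [brkt_neg_left hf, ha]
      funext m; simp
    | mul a b _ _ ha hb =>
      rw [brkt_mul_left, ha, hb]
      funext m; simp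
  | succ n ih =>
    intro f hf h1 hl
    rw [isDiffOpOfOrder_succ]
    intro r
    induction hgen r using Subring.closure_induction with
    | mem z hz =>
      rcases hz with ⟨s, rfl⟩ | ⟨i, rfl⟩
      · rw [h1 s]; exact diffOp_zero n
      · refine ih (brkt (x i) f) (brkt_additive hf (x i)) ?_ ?_
        · intro y
          rw [brkt_comm, h1 y, brkt_zero_fun]
        · intro l hlen
          have heq : (l.map x).foldr brkt (brkt (x i) f)
              = (((l ++ [i]).map x)).foldr brkt f := by
            rw [List.map_append, List.foldr_append]
            rfl
          rw [heq]
          apply hl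
          simp only [List.length_append, List.length_singleton]
          omega
    | zero => rw [brkt_zero_left hf]; exact diffOp_zero n
    | one => rw [brkt_one_left]; exact diffOp_zero n
    | add a b _ _ ha hb =>
      rw [brkt_add_left hf]
      exact diffOp_add ha hb
    | neg a _ ha =>
      rw [brkt_neg_left hf]
      exact diffOp_neg ha
    | mul a b _ _ ha hb =>
      rw [brkt_mul_left]
      exact diffOp_add (diffOp_smul_left a hb) (diffOp_precomp b ha)

/-! ### Generation over iterated Frobenius powers -/

lemma gen_all (p : ℕ) (hp : p.Prime) [CharP R p] (d : ℕ) (x : Fin d → R)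
    (hgen : ∀ y : R, y ∈ Subring.closure ((Set.range fun r : R => r ^ p) ∪ Set.range x)) :
    ∀ (e : ℕ) (y : R),
      y ∈ Subring.closure ((Set.range fun r : R => r ^ p ^ e) ∪ Set.range x) := by
  haveI := Fact.mk hp
  intro e
  induction e with
  | zero =>
    intro y
    apply Subring.subset_closure
    left
    exact ⟨y, by simp⟩
  | succ e ih =>
    intro y
    induction hgen y using Subring.closure_induction with
    | mem z hz =>
      rcases hz with ⟨r, rfl⟩ | ⟨i, rfl⟩
      · -- r ^ p ∈ T_{e+1}
        induction ih r using Subring.closure_induction with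
        | mem w hw =>
          rcases hw with ⟨s, rfl⟩ | ⟨i, rfl⟩
          · refine Subring.subset_closure (Set.mem_union_left _ ⟨s, ?_⟩)
            show s ^ p ^ (e + 1) = (s ^ p ^ e) ^ p
            rw [← pow_mul, pow_succ]
          · exact pow_mem (Subring.subset_closure (Set.mem_union_right _ (Set.mem_range_self i))) p
        | zero =>
          show (0 : R) ^ p ∈ _
          rw [zero_pow hp.ne_zero]; exact zero_mem _
        | one =>
          show (1 : R) ^ p ∈ _
          rw [one_pow]; exact one_mem _
        | add a b _ _ ha hb =>
          show (a + b) ^ p ∈ _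
          rw [add_pow_char]; exact add_mem ha hb
        | neg a _ ha =>
          show (-a) ^ p ∈ _
          have hnp : (-a) ^ p = -(a ^ p) := by
            rw [neg_pow, neg_one_pow_char R p, neg_one_mul]
          rw [hnp]; exact neg_mem ha
        | mul a b _ _ ha hb =>
          show (a * b) ^ p ∈ _
          rw [mul_pow]; exact mul_mem ha hb
      · exact Subring.subset_closure (Set.mem_union_right _ (Set.mem_range_self i))
    | zero => exact zero_mem _
    | one => exact one_mem _
    | add a b _ _ ha hb => exact add_mem ha hb
    | neg a _ ha => exact neg_mem ha
    | mul a b _ _ ha hb => exact mul_mem ha hb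

lemma length_eq_sum_count {d : ℕ} (l : List (Fin d)) :
    l.length = ∑ i : Fin d, l.count i := by
  induction l with
  | nil => simp
  | cons a t ih =>
    simp only [List.length_cons, List.count_cons, ih, Finset.sum_add_distrib]
    simp

end Aux

/-- **Proposition.** Let `R` be a commutative ring of characteristic `p > 0` that is generated
as an algebra over its subring `R^p` of `p`-th powers by `d` elements `x₁, …, x_d`.  Then for
`q = p^e`, every `R^q`-linear additive map `θ : M → N` between `R`-modules is a (ℤ-linear)
differential operator of order at most `d·q`. -/
theorem isDiffOpOfOrder_of_frobLinear
    (p : ℕ) (hp : p.Prime) (R : Type*) [CommRing R] [CharP R p]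
    (d : ℕ) (x : Fin d → R)
    (hgen : ∀ y : R, y ∈ Subring.closure ((Set.range fun r : R => r ^ p) ∪ Set.range x))
    {M N : Type*} [AddCommGroup M] [Module R M] [AddCommGroup N] [Module R N]
    (e : ℕ) (θ : M →+ N)
    (hθ : ∀ (r : R) (m : M), θ (r ^ p ^ e • m) = r ^ p ^ e • θ m) :
    IsDiffOpOfOrder R (d * p ^ e) ⇑θ := by
  set q := p ^ e with hq
  have hq1 : 1 ≤ q := Nat.one_le_iff_ne_zero.2 (pow_ne_zero e hp.ne_zero)
  have h1 : ∀ y : R, brkt (y ^ q) (⇑θ : M → N) = 0 := by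
    intro y
    funext m
    simp [brkt, hθ y m]
  refine main_induction q d x (gen_all p hp d x hgen e) (d * q) ⇑θ (fun a b => θ.map_add a b)
    h1 ?_
  intro l hlen
  -- pigeonhole: some i occurs at least q times in l
  have hcount : ∃ i : Fin d, q ≤ l.count i := by
    by_contra hcon
    push_neg at hcon
    have hsum : l.length = ∑ i : Fin d, l.count i := length_eq_sum_count l
    have hle : ∑ i : Fin d, l.count i ≤ ∑ _i : Fin d, (q - 1) :=
      Finset.sum_le_sum fun i _ => Nat.le_pred_of_lt (hcon i)
    have hconst : ∑ _i : Fin d, (q - 1) = d * (q - 1) := by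
      simp [Finset.sum_const, Finset.card_univ, mul_comm]
    have h2 : d * (q - 1) ≤ d * q := Nat.mul_le_mul_left d (Nat.sub_le q 1)
    omega
  obtain ⟨i, hi⟩ := hcount
  have hsub : List.Sublist (List.replicate q i) l :=
    List.replicate_sublist_iff.2 hi
  obtain ⟨t, ht⟩ := hsub.exists_perm_append
  haveI : LeftCommutative (brkt : R → (M → N) → (M → N)) := ⟨fun r s f => brkt_comm r s f⟩
  have hperm : List.Perm (l.map x) (List.replicate q (x i) ++ t.map x) := by
    have := ht.map x
    rwa [List.map_append, List.map_replicate] at this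
  rw [hperm.foldr_eq, List.foldr_append, foldr_brkt_replicate, hq,
    brkt_iterate_prime_pow p hp e, H1_foldr q (t.map x) ⇑θ h1 (x i)]
end

section
/- Let k be a commutative ring, R a commutative k-algebra, and M and N R-modules. Regard Hom_k(M,N) as a module over R ⊗_k R via ((r ⊗ s)·θ)(m) = r·θ(s·m), and let J be the kernel of the multiplication map R ⊗_k R → R, r ⊗ s ↦ rs. Then for every θ ∈ Hom_k(M,N) and every n ≥ 0, θ ∈ D^n_k(M,N) if and only if J^{n+1}·θ = 0. -/
/-!
The kernel `J` of multiplication is generated by the elements `r ⊗ 1 - 1 ⊗ r`, and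
`r ⊗ 1 - 1 ⊗ r` acts on `θ` as the commutator `[r, θ]`. Since the action is multiplicative,
`J ^ (n + 1)` kills `θ` exactly when `J ^ n` kills every `[r, θ]`, which is the recursion
defining differential operators; induction on `n` finishes the proof.
-/

open TensorProduct

section TensorAction

variable (k R M N : Type*) [CommRing k] [CommRing R] [Algebra k R]
  [AddCommGroup M] [Module k M] [Module R M] [IsScalarTower k R M]
  [AddCommGroup N] [Module k N] [Module R N] [IsScalarTower k R N]

/-- The action of `R ⊗[k] R` on `Hom_k(M, N)` given on pure tensors by
`((r ⊗ s) • θ) (m) = r • θ (s • m)`, as a `k`-linear map. -/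
noncomputable def tensorHomAction : (R ⊗[k] R) →ₗ[k] (M →ₗ[k] N) →ₗ[k] (M →ₗ[k] N) :=
  TensorProduct.lift <| LinearMap.mk₂ k
    (fun r s =>
      (DistribSMul.toLinearMap k (M →ₗ[k] N) r).comp
        (LinearMap.lcomp k N (DistribSMul.toLinearMap k M s)))
    (fun r r' s => by
      ext θ m
      simp [add_smul])
    (fun a r s => by
      ext θ m
      simp [smul_assoc])
    (fun r s s' => by
      ext θ m
      simp [add_smul])
    (fun a r s => by
      ext θ m
      simp only [LinearMap.coe_comp, Function.comp_apply, LinearMap.lcomp_apply,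
        DistribSMul.toLinearMap_apply, LinearMap.smul_apply, map_smul, smul_assoc]
      rw [smul_comm])

/-- The kernel `J` of the multiplication map `R ⊗[k] R → R`. -/
noncomputable def mulKer : Ideal (R ⊗[k] R) :=
  RingHom.ker (Algebra.TensorProduct.lmul' k (S := R)).toRingHom

theorem Ideal.mul_span_le_iff {A : Type*} [CommSemiring A] {I K : Ideal A} {S : Set A} :
    I * Ideal.span S ≤ K ↔ ∀ s ∈ S, ∀ a ∈ I, a * s ∈ K := by
  have : I * Ideal.span S ≤ K ↔ Ideal.span S ≤ K.colon I := by
    rw [mul_comm, Ideal.mul_le]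
    simp only [SetLike.le_def, Submodule.mem_colon, smul_eq_mul, SetLike.mem_coe]
  rw [this, Ideal.span_le]
  simp only [Set.subset_def, SetLike.mem_coe, Submodule.mem_colon, smul_eq_mul, mul_comm]

section

variable {k R M N}

theorem mulKer_eq_span :
    mulKer k R = Ideal.span (Set.range fun r : R => r ⊗ₜ[k] (1 : R) - 1 ⊗ₜ r) := by
  change KaehlerDifferential.ideal k R = _
  rw [← KaehlerDifferential.span_range_eq_ideal, Ideal.span, Ideal.span, ← Submodule.span_neg]
  congr 1
  ext x
  exact exists_congr fun r => by dsimp only; rw [← neg_sub, neg_inj]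

@[simp]
theorem tensorHomAction_tmul_apply (r s : R) (θ : M →ₗ[k] N) (m : M) :
    tensorHomAction k R M N (r ⊗ₜ s) θ m = r • θ (s • m) := by
  simp [tensorHomAction]

theorem tensorHomAction_one (θ : M →ₗ[k] N) : tensorHomAction k R M N 1 θ = θ := by
  ext m
  simp [Algebra.TensorProduct.one_def]

theorem tensorHomAction_mul (a b : R ⊗[k] R) (θ : M →ₗ[k] N) :
    tensorHomAction k R M N (a * b) θ =
      tensorHomAction k R M N a (tensorHomAction k R M N b θ) := by
  induction a using TensorProduct.induction_on with
  | zero => simp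
  | add x y hx hy => simp only [add_mul, map_add, LinearMap.add_apply, hx, hy]
  | tmul r s =>
    induction b using TensorProduct.induction_on with
    | zero => simp
    | add x y hx hy => simp only [mul_add, map_add, LinearMap.add_apply, hx, hy]
    | tmul r' s' =>
      ext m
      simp only [Algebra.TensorProduct.tmul_mul_tmul, tensorHomAction_tmul_apply, mul_smul,
        smul_comm s s']

theorem coe_tensorHomAction_tmul_one_sub_one_tmul (r : R) (θ : M →ₗ[k] N) :
    ⇑(tensorHomAction k R M N (r ⊗ₜ 1 - 1 ⊗ₜ r) θ) = fun m => r • θ m - θ (r • m) := by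
  ext m
  simp

variable (R) in
def tensorHomAnnihilator (θ : M →ₗ[k] N) : Ideal (R ⊗[k] R) where
  carrier := {a | tensorHomAction k R M N a θ = 0}
  zero_mem' := by simp
  add_mem' {a b} ha hb := by simp_all
  smul_mem' c a ha := by simp_all [smul_eq_mul, tensorHomAction_mul]

theorem mem_tensorHomAnnihilator {θ : M →ₗ[k] N} {a : R ⊗[k] R} :
    a ∈ tensorHomAnnihilator R θ ↔ tensorHomAction k R M N a θ = 0 := Iff.rfl

theorem mem_tensorHomAnnihilator_tensorHomAction {θ : M →ₗ[k] N} {a b : R ⊗[k] R} :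
    a ∈ tensorHomAnnihilator R (tensorHomAction k R M N b θ) ↔
      a * b ∈ tensorHomAnnihilator R θ := by
  simp only [mem_tensorHomAnnihilator, tensorHomAction_mul]

theorem top_le_tensorHomAnnihilator_iff {θ : M →ₗ[k] N} :
    ⊤ ≤ tensorHomAnnihilator R θ ↔ θ = 0 := by
  rw [top_le_iff, Ideal.eq_top_iff_one, mem_tensorHomAnnihilator, tensorHomAction_one]

theorem mul_mulKer_le_tensorHomAnnihilator_iff (I : Ideal (R ⊗[k] R)) (θ : M →ₗ[k] N) :
    I * mulKer k R ≤ tensorHomAnnihilator R θ ↔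
      ∀ r : R, I ≤ tensorHomAnnihilator R (tensorHomAction k R M N (r ⊗ₜ 1 - 1 ⊗ₜ r) θ) := by
  rw [mulKer_eq_span, Ideal.mul_span_le_iff, Set.forall_mem_range]
  simp only [SetLike.le_def, mem_tensorHomAnnihilator_tensorHomAction]

theorem isDiffOpOfOrder_zero_iff (θ : M →ₗ[k] N) :
    IsDiffOpOfOrder R 0 θ ↔ ∀ r : R, tensorHomAction k R M N (r ⊗ₜ 1 - 1 ⊗ₜ r) θ = 0 := by
  simp only [IsDiffOpOfOrder, LinearMap.ext_iff, coe_tensorHomAction_tmul_one_sub_one_tmul,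
    LinearMap.zero_apply, sub_eq_zero]
  exact forall₂_congr fun _ _ => eq_comm

theorem isDiffOpOfOrder_succ_iff (n : ℕ) (θ : M →ₗ[k] N) :
    IsDiffOpOfOrder R (n + 1) θ ↔
      ∀ r : R, IsDiffOpOfOrder R n ⇑(tensorHomAction k R M N (r ⊗ₜ 1 - 1 ⊗ₜ r) θ) := by
  simp only [IsDiffOpOfOrder, coe_tensorHomAction_tmul_one_sub_one_tmul]

end

/-- **Proposition.** A `k`-linear map `θ : M → N` is a differential operator of order `≤ n`
if and only if it is annihilated by `J^{n+1}`, where `J = ker (R ⊗_k R → R)` acts on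
`Hom_k(M, N)` by `((r ⊗ s) • θ) (m) = r • θ (s • m)`. -/
theorem isDiffOpOfOrder_iff_mulKer_pow_smul_eq_zero
    (θ : M →ₗ[k] N) (n : ℕ) :
    IsDiffOpOfOrder R n ⇑θ ↔
      ∀ a ∈ (mulKer k R) ^ (n + 1), tensorHomAction k R M N a θ = 0 := by
  change _ ↔ mulKer k R ^ (n + 1) ≤ tensorHomAnnihilator R θ
  induction n generalizing θ with
  | zero =>
    rw [isDiffOpOfOrder_zero_iff, zero_add, pow_one, ← one_mul (mulKer k R),
      mul_mulKer_le_tensorHomAnnihilator_iff]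
    simp only [Ideal.one_eq_top, top_le_tensorHomAnnihilator_iff]
  | succ n ih =>
    rw [isDiffOpOfOrder_succ_iff, pow_succ, mul_mulKer_le_tensorHomAnnihilator_iff]
    exact forall_congr' fun r => ih _

end TensorAction
end

section
/- Let S be a commutative Noetherian ring and J ⊆ S an ideal. Let P →^ψ Q →^φ T be an exact sequence of finitely generated S-modules, and for each n ≥ 0 let ψ_n : P/J^nP → Q/J^nQ and φ_n : Q/J^nQ → T/J^nT be the induced maps and M_n = ker(φ_n)/im(ψ_n) the homology of the induced sequence at the middle term. Then there exists m ≥ 0 such that for all n ≥ 0 the natural map M_{m+n} → M_n (induced by the quotient maps Q/J^{m+n}Q → Q/J^nQ) is zero. -/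
/-!
By Artin–Rees applied to the image `N = φ(Q) ⊆ T`, there is `m` with
`J^(m+n) T ∩ N ⊆ Jⁿ N = φ(Jⁿ Q)` for all `n`. So if `φ q ∈ J^(m+n) T`, then `φ q = φ q'` for
some `q' ∈ Jⁿ Q`, and exactness writes `q - q'` as `ψ p`.
-/

theorem Ideal.exists_pow_add_smul_top_inf_le_pow_smul {R M : Type*} [CommRing R]
    [IsNoetherianRing R] [AddCommGroup M] [Module R M] [Module.Finite R M]
    (I : Ideal R) (N : Submodule R M) :
    ∃ k : ℕ, ∀ n, I ^ (k + n) • ⊤ ⊓ N ≤ I ^ n • N := by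
  obtain ⟨k, hk⟩ := I.exists_pow_inf_eq_pow_smul N
  refine ⟨k, fun n => ?_⟩
  rw [hk (k + n) (Nat.le_add_right k n), Nat.add_sub_cancel_left]
  exact Submodule.smul_mono le_rfl inf_le_right

theorem Function.Exact.exists_sub_mem_of_apply_mem_map {R P Q T : Type*} [Ring R]
    [AddCommGroup P] [Module R P] [AddCommGroup Q] [Module R Q] [AddCommGroup T] [Module R T]
    {ψ : P →ₗ[R] Q} {φ : Q →ₗ[R] T} (hexact : Function.Exact ψ φ) {L : Submodule R Q} {q : Q}
    (hq : φ q ∈ L.map φ) : ∃ p : P, q - ψ p ∈ L := by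
  obtain ⟨q', hq', hφ⟩ := hq
  obtain ⟨p, hp⟩ := (hexact (q - q')).mp (by rw [map_sub, hφ, sub_self])
  exact ⟨p, by rwa [hp, sub_sub_cancel]⟩

theorem artinRees_middle_homology_eventually_zero_general
    (S : Type*) [CommRing S] [IsNoetherianRing S] (J : Ideal S)
    (P Q T : Type*) [AddCommGroup P] [Module S P]
    [AddCommGroup Q] [Module S Q]
    [AddCommGroup T] [Module S T] [Module.Finite S T]
    (ψ : P →ₗ[S] Q) (φ : Q →ₗ[S] T) (hexact : Function.Exact ⇑ψ ⇑φ) :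
    ∃ m : ℕ, ∀ (n : ℕ) (q : Q), φ q ∈ (J ^ (m + n) • ⊤ : Submodule S T) →
      ∃ p : P, q - ψ p ∈ (J ^ n • ⊤ : Submodule S Q) := by
  obtain ⟨m, hm⟩ := J.exists_pow_add_smul_top_inf_le_pow_smul (LinearMap.range φ)
  refine ⟨m, fun n q hq => hexact.exists_sub_mem_of_apply_mem_map ?_⟩
  rw [Submodule.map_smul'', Submodule.map_top]
  exact hm n ⟨hq, LinearMap.mem_range_self φ q⟩

/-- **Lemma (Artin–Rees).** Let `S` be a commutative Noetherian ring, `J ⊆ S` an ideal, and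
`P →[ψ] Q →[φ] T` an exact sequence of finitely generated `S`-modules.  Let `M_n` denote the
middle homology of the induced sequence `P/JⁿP → Q/JⁿQ → T/JⁿT`.  Then there is an `m ≥ 0`
such that for all `n` the natural map `M_{m+n} → M_n` is zero; elementwise: whenever
`φ q ∈ J^{m+n} T` there is `p` with `q - ψ p ∈ Jⁿ Q`. -/
theorem artinRees_middle_homology_eventually_zero
    (S : Type*) [CommRing S] [IsNoetherianRing S] (J : Ideal S)
    (P Q T : Type*) [AddCommGroup P] [Module S P] [Module.Finite S P]
    [AddCommGroup Q] [Module S Q] [Module.Finite S Q]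
    [AddCommGroup T] [Module S T] [Module.Finite S T]
    (ψ : P →ₗ[S] Q) (φ : Q →ₗ[S] T) (hexact : Function.Exact ⇑ψ ⇑φ) :
    ∃ m : ℕ, ∀ (n : ℕ) (q : Q), φ q ∈ (J ^ (m + n) • ⊤ : Submodule S T) →
      ∃ p : P, q - ψ p ∈ (J ^ n • ⊤ : Submodule S Q) :=
  artinRees_middle_homology_eventually_zero_general S J P Q T ψ φ hexact
end

section
/- Let n ≥ 1 and let E be an n×n matrix with nonnegative real entries such that some power E^u has all entries strictly positive, and let λ > 0 and v ∈ ℝ^n be such that v has all entries strictly positive, E·v = λ·v, and every complex eigenvalue μ of E with μ ≠ λ satisfies |μ| < λ. Then for every vector w ∈ ℝ^n with all entries strictly positive there exists a real number a > 0 such that lim_{m→∞} E^m·w / λ^m = a·v. -/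
open Matrix

/-- `μ ∈ ℂ` is an eigenvalue of the real matrix `E`. -/
def Matrix.HasComplexEigenvalue {n : ℕ} (E : Matrix (Fin n) (Fin n) ℝ) (μ : ℂ) : Prop :=
  ∃ z : Fin n → ℂ, z ≠ 0 ∧ (E.map (Complex.ofReal ·)) *ᵥ z = μ • z

/-!
Normalise `B = λ⁻¹ E`, so that `B v = v`, and track the extreme ratios
`r m = minᵢ (Bᵐ w)ᵢ / vᵢ` and `R m = maxᵢ (Bᵐ w)ᵢ / vᵢ`. Since `B ≥ 0` fixes `v`, the sandwich
`r m • v ≤ Bᵐ w ≤ R m • v` propagates, so `r` increases and `R` decreases. If every entry of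
`A = Bᵘ` satisfies `A i k * v k ≥ θ * v i` with `θ > 0`, one application of `A` shrinks the gap
`R - r` by the factor `1 - 2θ`: the coordinate where the maximum ratio is attained pushes every
coordinate of `A x` a fraction `θ` of the gap above the minimum, and symmetrically below the
maximum. Hence `r` and `R` have a common limit `a ≥ r 0 = minᵢ wᵢ / vᵢ > 0`, and `Bᵐ w → a • v`.
-/

open Filter Topology

section Ratios

variable {ι : Type*} [Fintype ι] [Nonempty ι]

noncomputable def minRatio (v x : ι → ℝ) : ℝ :=
  Finset.univ.inf' Finset.univ_nonempty fun i => x i / v i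

noncomputable def maxRatio (v x : ι → ℝ) : ℝ :=
  Finset.univ.sup' Finset.univ_nonempty fun i => x i / v i

variable {v x : ι → ℝ}

theorem le_minRatio_iff (hv : ∀ i, 0 < v i) {c : ℝ} :
    c ≤ minRatio v x ↔ ∀ i, c * v i ≤ x i := by
  simp only [minRatio, Finset.le_inf'_iff, Finset.mem_univ, true_imp_iff, le_div_iff₀ (hv _)]

theorem maxRatio_le_iff (hv : ∀ i, 0 < v i) {c : ℝ} :
    maxRatio v x ≤ c ↔ ∀ i, x i ≤ c * v i := by
  simp only [maxRatio, Finset.sup'_le_iff, Finset.mem_univ, true_imp_iff, div_le_iff₀ (hv _)]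

theorem minRatio_mul_le (hv : ∀ i, 0 < v i) (i : ι) : minRatio v x * v i ≤ x i :=
  (le_minRatio_iff hv).1 le_rfl i

theorem le_maxRatio_mul (hv : ∀ i, 0 < v i) (i : ι) : x i ≤ maxRatio v x * v i :=
  (maxRatio_le_iff hv).1 le_rfl i

theorem minRatio_le_maxRatio (hv : ∀ i, 0 < v i) : minRatio v x ≤ maxRatio v x := by
  obtain ⟨i⟩ := ‹Nonempty ι›
  exact le_of_mul_le_mul_right ((minRatio_mul_le hv i).trans (le_maxRatio_mul hv i)) (hv i)

theorem minRatio_pos (hv : ∀ i, 0 < v i) (hx : ∀ i, 0 < x i) : 0 < minRatio v x := by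
  simp only [minRatio, Finset.lt_inf'_iff, Finset.mem_univ, true_imp_iff]
  exact fun i => div_pos (hx i) (hv i)

theorem exists_apply_eq_maxRatio_mul (hv : ∀ i, 0 < v i) : ∃ k, x k = maxRatio v x * v k := by
  obtain ⟨k, -, hk⟩ := Finset.exists_mem_eq_sup' Finset.univ_nonempty fun i => x i / v i
  exact ⟨k, by rw [maxRatio, hk, div_mul_cancel₀ _ (hv k).ne']⟩

theorem minRatio_neg (hv : ∀ i, 0 < v i) : minRatio v (-x) = -maxRatio v x := by
  refine le_antisymm ?_ ?_
  · rw [le_neg, maxRatio_le_iff hv]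
    intro i
    have := minRatio_mul_le hv (x := -x) i
    rw [Pi.neg_apply] at this
    linarith
  · rw [le_minRatio_iff hv]
    intro i
    have := le_maxRatio_mul hv (x := x) i
    rw [Pi.neg_apply]
    linarith

theorem maxRatio_neg (hv : ∀ i, 0 < v i) : maxRatio v (-x) = -minRatio v x := by
  rw [eq_neg_iff_add_eq_zero, ← neg_neg x, minRatio_neg hv, neg_neg, add_neg_cancel]

end Ratios

theorem tendsto_zero_of_antitone_of_le_mul_add {f : ℕ → ℝ} (hf : Antitone f)
    (hf0 : ∀ m, 0 ≤ f m) {q : ℝ} (hq : q < 1) (u : ℕ) (hcontr : ∀ m, f (m + u) ≤ q * f m) :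
    Tendsto f atTop (𝓝 0) := by
  have hL : Tendsto f atTop (𝓝 (⨅ m, f m)) :=
    tendsto_atTop_ciInf hf ⟨0, by rintro _ ⟨m, rfl⟩; exact hf0 m⟩
  have hL0 : 0 ≤ ⨅ m, f m := le_ciInf hf0
  have hLq : ⨅ m, f m ≤ q * ⨅ m, f m :=
    le_of_tendsto_of_tendsto' ((tendsto_add_atTop_iff_nat u).2 hL) (hL.const_mul q) hcontr
  convert hL
  nlinarith

namespace Matrix

variable {ι : Type*} [Fintype ι] {A : Matrix ι ι ℝ} {v : ι → ℝ}

theorem mulVec_nonneg (hA : ∀ i j, 0 ≤ A i j) {x : ι → ℝ} (hx : 0 ≤ x) : 0 ≤ A *ᵥ x :=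
  fun i => Finset.sum_nonneg fun j _ => mul_nonneg (hA i j) (hx j)

theorem pow_mulVec_eq_self [DecidableEq ι] (hAv : A *ᵥ v = v) (k : ℕ) : (A ^ k) *ᵥ v = v := by
  induction k with
  | zero => rw [pow_zero, one_mulVec]
  | succ k ih => rw [pow_succ, ← mulVec_mulVec, hAv, ih]

theorem exists_pos_mul_le_mul_of_pos [Nonempty ι] (hA : ∀ i j, 0 < A i j) (hv : ∀ i, 0 < v i) :
    ∃ θ > 0, ∀ i k, θ * v i ≤ A i k * v k := by
  refine ⟨Finset.univ.inf' Finset.univ_nonempty fun p : ι × ι => A p.1 p.2 * v p.2 / v p.1,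
    ?_, fun i k => ?_⟩
  · simp only [Finset.lt_inf'_iff, Finset.mem_univ, true_imp_iff]
    exact fun p => div_pos (mul_pos (hA _ _) (hv _)) (hv _)
  · rw [← le_div_iff₀ (hv i)]
    exact Finset.inf'_le _ (Finset.mem_univ (i, k))

variable [Nonempty ι]

theorem minRatio_le_minRatio_mulVec (hA : ∀ i j, 0 ≤ A i j) (hv : ∀ i, 0 < v i)
    (hAv : A *ᵥ v = v) (x : ι → ℝ) : minRatio v x ≤ minRatio v (A *ᵥ x) := by
  have hy : 0 ≤ x - minRatio v x • v := fun i => by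
    simpa [sub_nonneg] using minRatio_mul_le hv i
  have hAy := mulVec_nonneg hA hy
  rw [mulVec_sub, mulVec_smul, hAv] at hAy
  rw [le_minRatio_iff hv]
  intro i
  simpa [sub_nonneg] using hAy i

theorem maxRatio_mulVec_le_maxRatio (hA : ∀ i j, 0 ≤ A i j) (hv : ∀ i, 0 < v i)
    (hAv : A *ᵥ v = v) (x : ι → ℝ) : maxRatio v (A *ᵥ x) ≤ maxRatio v x := by
  have := minRatio_le_minRatio_mulVec hA hv hAv (-x)
  rwa [mulVec_neg, minRatio_neg hv, minRatio_neg hv, neg_le_neg_iff] at this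

theorem minRatio_add_mul_le_minRatio_mulVec (hA : ∀ i j, 0 ≤ A i j) (hv : ∀ i, 0 < v i)
    (hAv : A *ᵥ v = v) {θ : ℝ} (hθ : ∀ i k, θ * v i ≤ A i k * v k) (x : ι → ℝ) :
    minRatio v x + θ * (maxRatio v x - minRatio v x) ≤ minRatio v (A *ᵥ x) := by
  set m := minRatio v x
  set M := maxRatio v x
  set y := x - m • v with hy_def
  have hy : 0 ≤ y := fun i => by simpa [y, sub_nonneg] using minRatio_mul_le hv i
  obtain ⟨k, hk⟩ := exists_apply_eq_maxRatio_mul hv (x := x)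
  have hyk : y k = (M - m) * v k := by
    rw [hy_def, Pi.sub_apply, Pi.smul_apply, smul_eq_mul, hk]
    ring
  have hAy : A *ᵥ y = A *ᵥ x - m • v := by rw [mulVec_sub, mulVec_smul, hAv]
  rw [le_minRatio_iff hv]
  intro i
  have key : θ * v i * (M - m) ≤ (A *ᵥ y) i := calc
    θ * v i * (M - m) ≤ A i k * v k * (M - m) :=
      mul_le_mul_of_nonneg_right (hθ i k) (sub_nonneg.2 (minRatio_le_maxRatio hv))
    _ = A i k * y k := by rw [hyk]; ring
    _ ≤ ∑ j, A i j * y j :=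
      Finset.single_le_sum (fun j _ => mul_nonneg (hA i j) (hy j)) (Finset.mem_univ k)
    _ = (A *ᵥ y) i := rfl
  rw [hAy, Pi.sub_apply, Pi.smul_apply, smul_eq_mul] at key
  linarith

theorem maxRatio_sub_minRatio_mulVec_le (hA : ∀ i j, 0 ≤ A i j) (hv : ∀ i, 0 < v i)
    (hAv : A *ᵥ v = v) {θ : ℝ} (hθ : ∀ i k, θ * v i ≤ A i k * v k) (x : ι → ℝ) :
    maxRatio v (A *ᵥ x) - minRatio v (A *ᵥ x) ≤
      (1 - 2 * θ) * (maxRatio v x - minRatio v x) := by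
  have hlow := minRatio_add_mul_le_minRatio_mulVec hA hv hAv hθ x
  have hhigh := minRatio_add_mul_le_minRatio_mulVec hA hv hAv hθ (-x)
  rw [mulVec_neg, minRatio_neg hv, minRatio_neg hv, maxRatio_neg hv] at hhigh
  linarith

theorem tendsto_smul_of_minRatio_of_maxRatio (hv : ∀ i, 0 < v i) {x : ℕ → ι → ℝ} {a : ℝ}
    (hr : Tendsto (fun m => minRatio v (x m)) atTop (𝓝 a))
    (hR : Tendsto (fun m => maxRatio v (x m)) atTop (𝓝 a)) :
    Tendsto x atTop (𝓝 (a • v)) := by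
  rw [tendsto_pi_nhds]
  intro i
  simpa using tendsto_of_tendsto_of_tendsto_of_le_of_le (hr.mul_const (v i))
    (hR.mul_const (v i)) (fun m => minRatio_mul_le hv i) (fun m => le_maxRatio_mul hv i)

theorem exists_tendsto_pow_mulVec [DecidableEq ι] (hA : ∀ i j, 0 ≤ A i j)
    (hprim : ∃ u : ℕ, ∀ i j, 0 < (A ^ u) i j) (hv : ∀ i, 0 < v i) (hAv : A *ᵥ v = v)
    (w : ι → ℝ) :
    ∃ a, minRatio v w ≤ a ∧ Tendsto (fun m : ℕ => (A ^ m) *ᵥ w) atTop (𝓝 (a • v)) := by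
  obtain ⟨u, hu⟩ := hprim
  obtain ⟨θ, hθ, hθu⟩ := exists_pos_mul_le_mul_of_pos hu hv
  set r := fun m : ℕ => minRatio v ((A ^ m) *ᵥ w)
  set R := fun m : ℕ => maxRatio v ((A ^ m) *ᵥ w)
  have hstep : ∀ m k, (A ^ (m + k)) *ᵥ w = (A ^ k) *ᵥ ((A ^ m) *ᵥ w) := fun m k => by
    rw [add_comm, pow_add, mulVec_mulVec]
  have hr : Monotone r := monotone_nat_of_le_succ fun m => by
    simpa only [r, hstep m 1, pow_one] using minRatio_le_minRatio_mulVec hA hv hAv _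
  have hR : Antitone R := antitone_nat_of_succ_le fun m => by
    simpa only [R, hstep m 1, pow_one] using maxRatio_mulVec_le_maxRatio hA hv hAv _
  have hgap : Tendsto (R - r) atTop (𝓝 0) :=
    tendsto_zero_of_antitone_of_le_mul_add (fun _ _ h => sub_le_sub (hR h) (hr h))
      (fun m => sub_nonneg.2 (minRatio_le_maxRatio hv)) (by linarith : 1 - 2 * θ < 1) u
      fun m => by
        simpa only [Pi.sub_apply, R, r, hstep m u] using maxRatio_sub_minRatio_mulVec_le
          (fun i j => (hu i j).le) hv (pow_mulVec_eq_self hAv u) hθu _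
  have hbdd : BddAbove (Set.range r) :=
    ⟨R 0, by rintro _ ⟨m, rfl⟩; exact (minRatio_le_maxRatio hv).trans (hR m.zero_le)⟩
  have hra : Tendsto r atTop (𝓝 (⨆ m, r m)) := tendsto_atTop_ciSup hr hbdd
  refine ⟨⨆ m, r m, by simpa [r] using le_ciSup hbdd 0,
    tendsto_smul_of_minRatio_of_maxRatio hv hra ?_⟩
  simpa using hra.add hgap

end Matrix

theorem perron_frobenius_power_limit_general
    (n : ℕ) (hn : 1 ≤ n) (E : Matrix (Fin n) (Fin n) ℝ)
    (hE : ∀ i j, 0 ≤ E i j) (hpos : ∃ u : ℕ, ∀ i j, 0 < (E ^ u) i j)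
    (lam : ℝ) (hlam : 0 < lam) (v : Fin n → ℝ) (hv : ∀ i, 0 < v i)
    (heig : E *ᵥ v = lam • v) :
    ∀ w : Fin n → ℝ, (∀ i, 0 < w i) →
      ∃ a : ℝ, 0 < a ∧
        Filter.Tendsto (fun m : ℕ => (lam ^ m)⁻¹ • ((E ^ m) *ᵥ w)) Filter.atTop
          (nhds (a • v)) := by
  intro w hw
  have : Nonempty (Fin n) := ⟨⟨0, hn⟩⟩
  have hB : ∀ i j, 0 ≤ (lam⁻¹ • E) i j := fun i j => mul_nonneg (inv_nonneg.2 hlam.le) (hE i j)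
  have hprim : ∃ u : ℕ, ∀ i j, 0 < ((lam⁻¹ • E) ^ u) i j := hpos.imp fun u hu i j => by
    rw [smul_pow]
    exact mul_pos (pow_pos (inv_pos.2 hlam) u) (hu i j)
  have hBv : (lam⁻¹ • E) *ᵥ v = v := by
    rw [smul_mulVec, heig, smul_smul, inv_mul_cancel₀ hlam.ne', one_smul]
  obtain ⟨a, hwa, hlim⟩ := Matrix.exists_tendsto_pow_mulVec hB hprim hv hBv w
  refine ⟨a, (minRatio_pos hv hw).trans_le hwa, ?_⟩
  simpa only [smul_pow, inv_pow, smul_mulVec] using hlim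

/-- **Perron–Frobenius theorem (primitive case), second part.**  Let `E` be a nonnegative real
square matrix some power of which is strictly positive, `lam > 0` a dominant eigenvalue with
strictly positive eigenvector `v`.  Then for every strictly positive vector `w` the normalized
iterates `E^m w / lam^m` converge to `a • v` for some `a > 0`. -/
theorem perron_frobenius_power_limit
    (n : ℕ) (hn : 1 ≤ n) (E : Matrix (Fin n) (Fin n) ℝ)
    (hE : ∀ i j, 0 ≤ E i j) (hpos : ∃ u : ℕ, ∀ i j, 0 < (E ^ u) i j)
    (lam : ℝ) (hlam : 0 < lam) (v : Fin n → ℝ) (hv : ∀ i, 0 < v i)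
    (heig : E *ᵥ v = lam • v)
    (hdom : ∀ μ : ℂ, E.HasComplexEigenvalue μ → μ ≠ (lam : ℂ) → ‖μ‖ < lam) :
    ∀ w : Fin n → ℝ, (∀ i, 0 < w i) →
      ∃ a : ℝ, 0 < a ∧
        Filter.Tendsto (fun m : ℕ => (lam ^ m)⁻¹ • ((E ^ m) *ᵥ w)) Filter.atTop
          (nhds (a • v)) :=
  perron_frobenius_power_limit_general n hn E hE hpos lam hlam v hv heig
end

section
/- Let k be a field and let (Λ_e)_{e∈ℕ} be a directed system of associative unital k-algebras with k-algebra transition maps, such that each Λ_e has only finitely many isomorphism classes of simple left modules. For each e let u_e ∈ ℕ ∪ {∞} be the minimal k-dimension of a nonzero left Λ_e-module that is finite-dimensional over k (u_e = ∞ if no such module exists), and let Λ be the direct limit of the system. Then sup_e u_e equals the minimal k-dimension of a nonzero left Λ-module that is finite-dimensional over k (again ∞ if no such module exists). In particular, Λ has a nonzero finite-dimensional module if and only if sup_e u_e < ∞. -/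
open scoped DirectSum

/-- The minimal `k`-dimension of a nonzero left `A`-module that is finite dimensional over
`k` (the `k`-action being through the structure map `k → A`); `⊤` if there is none. -/
noncomputable def minFinDimRep (k A : Type) [Field k] [Ring A] [Algebra k A] : ℕ∞ :=
  sInf {d : ℕ∞ | ∃ (M : Type) (_ : AddCommGroup M) (_ : Module A M) (_ : Module k M)
    (_ : IsScalarTower k A M), Nontrivial M ∧ Module.Finite k M ∧
      d = (Module.finrank k M : ℕ∞)}

/-- The transition map `Λ_e → Λ_{e+m}` of a directed system indexed by `ℕ`. -/
def iterTransition {k : Type} [CommRing k] {Λ : ℕ → Type} [∀ e, Ring (Λ e)]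
    [∀ e, Algebra k (Λ e)] (f : ∀ e, Λ e →ₐ[k] Λ (e + 1)) : ∀ e m, Λ e →ₐ[k] Λ (e + m)
  | _, 0 => AlgHom.id k _
  | e, m + 1 => (f (e + m)).comp (iterTransition f e m)

namespace MFDAux

def repSet (k A : Type) [Field k] [Ring A] [Algebra k A] : Set ℕ∞ :=
  {d : ℕ∞ | ∃ (M : Type) (_ : AddCommGroup M) (_ : Module A M) (_ : Module k M)
    (_ : IsScalarTower k A M), Nontrivial M ∧ Module.Finite k M ∧
      d = (Module.finrank k M : ℕ∞)}

lemma minFinDimRep_eq (k A : Type) [Field k] [Ring A] [Algebra k A] :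
    minFinDimRep k A = sInf (repSet k A) := rfl

lemma repSet_mono {k A B : Type} [Field k] [Ring A] [Ring B] [Algebra k A] [Algebra k B]
    (φ : A →ₐ[k] B) : repSet k B ⊆ repSet k A := by
  rintro d ⟨M, _, _, _, _, hnt, hfin, rfl⟩
  letI : Module A M := Module.compHom M φ.toRingHom
  haveI : IsScalarTower k A M := ⟨fun c a m => by
    show φ (c • a) • m = c • (φ a • m)
    rw [map_smul, smul_assoc]⟩
  exact ⟨M, ‹_›, ‹_›, ‹_›, ‹_›, hnt, hfin, rfl⟩

lemma minFinDimRep_le {k A B : Type} [Field k] [Ring A] [Ring B] [Algebra k A] [Algebra k B]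
    (φ : A →ₐ[k] B) : minFinDimRep k A ≤ minFinDimRep k B :=
  sInf_le_sInf (repSet_mono φ)

lemma mem_repSet_of_rho {k A V : Type} [Field k] [Ring A] [Algebra k A] [AddCommGroup V]
    [Module k V] [Nontrivial V] [Module.Finite k V] (ρ : A →ₐ[k] Module.End k V) :
    (Module.finrank k V : ℕ∞) ∈ repSet k A :=
  repSet_mono ρ ⟨V, ‹_›, Module.End.applyModule, ‹_›, Module.End.apply_isScalarTower,
    ‹_›, ‹_›, rfl⟩

lemma simple_of_minimal {k A M : Type} [Field k] [Ring A] [Algebra k A] [AddCommGroup M]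
    [Module A M] [Module k M] [IsScalarTower k A M] [Nontrivial M] [Module.Finite k M]
    (hmin : ∀ d ∈ repSet k A, (Module.finrank k M : ℕ∞) ≤ d) : IsSimpleModule A M := by
  haveI : Nontrivial (Submodule A M) := (Submodule.nontrivial_iff A).mpr inferInstance
  refine { eq_bot_or_eq_top := ?_ }
  intro N
  by_cases hN : N = ⊥
  · exact Or.inl hN
  · right
    set N' : Submodule k M := N.restrictScalars k with hN'
    haveI : Nontrivial N' :=
      Submodule.nontrivial_iff_ne_bot.mpr (by simpa [hN'] using hN)
    have hmem : (Module.finrank k N' : ℕ∞) ∈ repSet k A :=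
      ⟨N', inferInstance, inferInstance, inferInstance, inferInstance,
        inferInstance, inferInstance, rfl⟩
    have h1 : Module.finrank k M ≤ Module.finrank k N' := by
      exact_mod_cast hmin _ hmem
    have h2 : Module.finrank k N' ≤ Module.finrank k M := N'.finrank_le
    have : N' = ⊤ := Submodule.eq_top_of_finrank_eq (le_antisymm h2 h1)
    exact (Submodule.restrictScalars_eq_top_iff k A M).mp this

/-- The module structure on `V` induced by an algebra map into endomorphisms. -/
def modOfRho {k A V : Type} [Field k] [Ring A] [Algebra k A] [AddCommGroup V] [Module k V]
    (ρ : A →ₐ[k] Module.End k V) : Module A V := Module.compHom V ρ.toRingHom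

lemma simple_of_minimal_rho {k A V : Type} [Field k] [Ring A] [Algebra k A] [AddCommGroup V]
    [Module k V] [Nontrivial V] [Module.Finite k V] (ρ : A →ₐ[k] Module.End k V)
    (hmin : ∀ d ∈ repSet k A, (Module.finrank k V : ℕ∞) ≤ d) :
    @IsSimpleModule A _ V _ (modOfRho ρ) := by
  letI := modOfRho ρ
  haveI : IsScalarTower k A V := ⟨fun c a v => by
    show ρ (c • a) v = c • (ρ a v)
    rw [map_smul]
    rfl⟩
  exact simple_of_minimal hmin

def endRel {k A V : Type} [Field k] [Ring A] [Algebra k A] [AddCommGroup V] [Module k V]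
    (ρ₁ ρ₂ : A →ₐ[k] Module.End k V) : Prop :=
  ∃ T : V ≃+ V, ∀ a v, T (ρ₁ a v) = ρ₂ a (T v)

def endSetoid (k A V : Type) [Field k] [Ring A] [Algebra k A] [AddCommGroup V] [Module k V] :
    Setoid (A →ₐ[k] Module.End k V) where
  r := endRel
  iseqv := by
    constructor
    · exact fun ρ => ⟨AddEquiv.refl V, fun a v => rfl⟩
    · rintro ρ₁ ρ₂ ⟨T, hT⟩
      exact ⟨T.symm, fun a v => by
        apply T.injective
        rw [T.apply_symm_apply, hT, T.apply_symm_apply]⟩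
    · rintro ρ₁ ρ₂ ρ₃ ⟨T₁, hT₁⟩ ⟨T₂, hT₂⟩
      exact ⟨T₁.trans T₂, fun a v => by
        simp only [AddEquiv.trans_apply, hT₁, hT₂]⟩

lemma finite_quot {k A V : Type} [Field k] [Ring A] [Algebra k A] [AddCommGroup V] [Module k V]
    (hs : ∃ (t : ℕ) (Ms : Fin t → ModuleCat.{0} A),
      ∀ (M : Type) (_ : AddCommGroup M) (_ : Module A M),
        IsSimpleModule A M → ∃ i, Nonempty (M ≃ₗ[A] Ms i))
    (hallsimple : ∀ ρ : A →ₐ[k] Module.End k V, @IsSimpleModule A _ V _ (modOfRho ρ)) :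
    Finite (Quotient (endSetoid k A V)) := by
  obtain ⟨t, Ms, hM⟩ := hs
  have key : ∀ ρ : A →ₐ[k] Module.End k V, ∃ (i : Fin t) (T : V ≃+ Ms i),
      ∀ a v, T (ρ a v) = a • T v := by
    intro ρ
    letI := modOfRho ρ
    obtain ⟨i, ⟨E⟩⟩ := hM V _ _ (hallsimple ρ)
    refine ⟨i, E.toAddEquiv, fun a v => ?_⟩
    have h : ρ a v = a • v := rfl
    rw [h]
    exact E.map_smul a v
  choose idx T hT using key
  apply Finite.of_injective (fun c : Quotient (endSetoid k A V) => idx c.out)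
  intro c₁ c₂ h
  set ρ₁ := c₁.out with hρ₁
  set ρ₂ := c₂.out with hρ₂
  obtain ⟨T₂', hT₂'⟩ : ∃ T' : V ≃+ Ms (idx ρ₁), ∀ a v, T' (ρ₂ a v) = a • T' v := by
    rw [show idx ρ₁ = idx ρ₂ from h]
    exact ⟨T ρ₂, hT ρ₂⟩
  have hrel : endRel ρ₁ ρ₂ := ⟨(T ρ₁).trans T₂'.symm, fun a v => by
    simp only [AddEquiv.trans_apply]
    rw [hT ρ₁]
    apply T₂'.injective
    rw [T₂'.apply_symm_apply, hT₂', T₂'.apply_symm_apply]⟩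
  calc c₁ = Quotient.mk _ ρ₁ := (Quotient.out_eq c₁).symm
    _ = Quotient.mk _ ρ₂ := Quotient.sound hrel
    _ = c₂ := Quotient.out_eq c₂

noncomputable def rhoOfModule (k : Type) {A M V : Type} [Field k] [Ring A] [Algebra k A]
    [AddCommGroup M] [Module A M] [Module k M] [IsScalarTower k A M]
    [AddCommGroup V] [Module k V] (e : M ≃ₗ[k] V) : A →ₐ[k] Module.End k V :=
  (e.conjAlgEquiv k).toAlgHom.comp (Algebra.lsmul k k M)

def castΛ {Λ : ℕ → Type} {a b : ℕ} (h : a = b) (x : Λ a) : Λ b := h ▸ x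

lemma castΛ_inj {Λ : ℕ → Type} {a b : ℕ} (h : a = b) :
    Function.Injective (castΛ (Λ := Λ) h) := by subst h; exact fun x y hxy => hxy

lemma castΛ_f {k : Type} [CommRing k] {Λ : ℕ → Type} [∀ e, Ring (Λ e)] [∀ e, Algebra k (Λ e)]
    (f : ∀ e, Λ e →ₐ[k] Λ (e + 1)) {a b : ℕ} (h : a = b) (w : Λ a) :
    f b (castΛ h w) = castΛ (congrArg (· + 1) h) (f a w) := by subst h; rfl

lemma iter_succ_left {k : Type} [CommRing k] {Λ : ℕ → Type} [∀ e, Ring (Λ e)]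
    [∀ e, Algebra k (Λ e)] (f : ∀ e, Λ e →ₐ[k] Λ (e + 1)) :
    ∀ (m a : ℕ) (z : Λ a), iterTransition f a (m + 1) z =
      castΛ (by omega : (a + 1) + m = a + (m + 1)) (iterTransition f (a + 1) m (f a z)) := by
  intro m
  induction m with
  | zero => intro a z; rfl
  | succ m ih =>
    intro a z
    show f (a + (m + 1)) (iterTransition f a (m + 1) z) = _
    rw [ih a z, castΛ_f]
    rfl

lemma exists_dep_seq {α : ℕ → Sort*} (Rel : ∀ n, α n → α (n + 1) → Prop) (a0 : α 0)
    (hstep : ∀ n a, ∃ b, Rel n a b) :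
    ∃ F : ∀ n, α n, F 0 = a0 ∧ ∀ n, Rel n (F n) (F (n + 1)) := by
  choose gg hg using hstep
  exact ⟨fun n => Nat.rec a0 gg n, rfl, fun n => hg n _⟩

end MFDAux

/-- **Lemma.**  Let `(Λ_e)_{e ∈ ℕ}` be a directed system of `k`-algebras, each having only
finitely many isomorphism classes of simple left modules, and let `Λ` be the direct limit
(here axiomatized by compatible maps `g_e : Λ_e → Λ` that are jointly surjective and whose
kernels are the eventual-equality kernels).  Then `sup_e u_e`, where `u_e` is the minimal
`k`-dimension of a nonzero finite-dimensional `Λ_e`-module, equals the minimal `k`-dimension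
of a nonzero finite-dimensional `Λ`-module; in particular `Λ` has a nonzero
finite-dimensional module iff `sup_e u_e < ∞`. -/
theorem minFinDimRep_directLimit
    (k : Type) [Field k] (Λ : ℕ → Type) [∀ e, Ring (Λ e)] [∀ e, Algebra k (Λ e)]
    (f : ∀ e, Λ e →ₐ[k] Λ (e + 1))
    -- each `Λ_e` has only finitely many isomorphism classes of simple left modules
    (hsimple : ∀ e, ∃ (t : ℕ) (Ms : Fin t → ModuleCat.{0} (Λ e)),
      ∀ (M : Type) (_ : AddCommGroup M) (_ : Module (Λ e) M),
        IsSimpleModule (Λ e) M → ∃ i, Nonempty (M ≃ₗ[Λ e] Ms i))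
    (L : Type) [Ring L] [Algebra k L] (g : ∀ e, Λ e →ₐ[k] L)
    (hcomp : ∀ e, (g (e + 1)).comp (f e) = g e)
    (hsurj : ∀ x : L, ∃ (e : ℕ) (y : Λ e), g e y = x)
    (hker : ∀ (e : ℕ) (x y : Λ e), g e x = g e y →
      ∃ m, iterTransition f e m x = iterTransition f e m y) :
    (⨆ e, minFinDimRep k (Λ e)) = minFinDimRep k L ∧
      ((∃ (M : Type) (_ : AddCommGroup M) (_ : Module L M) (_ : Module k M)
        (_ : IsScalarTower k L M), Nontrivial M ∧ Module.Finite k M) ↔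
        (⨆ e, minFinDimRep k (Λ e)) < ⊤) := by
  classical
  have hmono : Monotone (fun e => minFinDimRep k (Λ e)) :=
    monotone_nat_of_le_succ (fun e => MFDAux.minFinDimRep_le (f e))
  have hle : (⨆ e, minFinDimRep k (Λ e)) ≤ minFinDimRep k L :=
    iSup_le fun e => MFDAux.minFinDimRep_le (g e)
  have hhard : minFinDimRep k L ≤ ⨆ e, minFinDimRep k (Λ e) := by
    rcases eq_top_or_lt_top (⨆ e, minFinDimRep k (Λ e)) with hS | hS
    · rw [hS]; exact le_top
    obtain ⟨s, hs0⟩ := WithTop.ne_top_iff_exists.mp hS.ne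
    have hs : ((s : ℕ) : ℕ∞) = ⨆ e, minFinDimRep k (Λ e) := hs0
    -- attainment of the supremum
    have hatt : ∃ e0, minFinDimRep k (Λ e0) = ⨆ e, minFinDimRep k (Λ e) := by
      by_contra hno
      push_neg at hno
      have hlt : ∀ e, minFinDimRep k (Λ e) < ⨆ e, minFinDimRep k (Λ e) := fun e =>
        (le_iSup (fun e => minFinDimRep k (Λ e)) e).lt_of_ne (hno e)
      cases s with
      | zero =>
        have h0 := hlt 0
        rw [← hs] at h0
        simp at h0
      | succ s' =>
        have hb : ∀ e, minFinDimRep k (Λ e) ≤ (s' : ℕ∞) := by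
          intro e
          have h1 := hlt e
          rw [← hs] at h1
          have h2 : minFinDimRep k (Λ e) < (s' : ℕ∞) + 1 := by
            rwa [Nat.cast_add, Nat.cast_one] at h1
          exact (ENat.lt_add_one_iff (by simp)).mp h2
        have h3 : (⨆ e, minFinDimRep k (Λ e)) ≤ (s' : ℕ∞) := iSup_le hb
        rw [← hs] at h3
        have h4 : (s' + 1 : ℕ) ≤ s' := Nat.cast_le.mp h3
        omega
    obtain ⟨e0, he0⟩ := hatt
    have hueq : ∀ n : ℕ, minFinDimRep k (Λ (e0 + n)) = (s : ℕ∞) := by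
      intro n
      refine le_antisymm ((le_iSup (fun e => minFinDimRep k (Λ e)) (e0 + n)).trans_eq hs.symm) ?_
      have h1 : minFinDimRep k (Λ e0) ≤ minFinDimRep k (Λ (e0 + n)) :=
        hmono (Nat.le_add_right e0 n)
      rw [he0, ← hs] at h1
      exact h1
    -- witnesses at levels ≥ e0
    have hwit : ∀ n : ℕ, ∃ (M : Type) (_ : AddCommGroup M) (_ : Module (Λ (e0 + n)) M)
        (_ : Module k M) (_ : IsScalarTower k (Λ (e0 + n)) M),
        Nontrivial M ∧ Module.Finite k M ∧ Module.finrank k M = s := by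
      intro n
      have hne : (MFDAux.repSet k (Λ (e0 + n))).Nonempty := by
        by_contra hemp
        rw [Set.not_nonempty_iff_eq_empty] at hemp
        have h5 := hueq n
        rw [MFDAux.minFinDimRep_eq, hemp, sInf_empty] at h5
        exact (by simp : ((⊤ : ℕ∞) ≠ (s : ℕ∞))) h5
      have hmem := csInf_mem hne
      rw [← MFDAux.minFinDimRep_eq, hueq n] at hmem
      obtain ⟨M, i1, i2, i3, i4, hnt, hfin, hd⟩ := hmem
      exact ⟨M, i1, i2, i3, i4, hnt, hfin, by exact_mod_cast hd.symm⟩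
    have hspos : 0 < s := by
      obtain ⟨M, i1, i2, i3, i4, hnt, hfin, hfr⟩ := hwit 0
      rw [← hfr]
      exact Module.finrank_pos
    haveI : Nonempty (Fin s) := ⟨⟨0, hspos⟩⟩
    haveI : Nontrivial (Fin s → k) := inferInstance
    have hfrV : Module.finrank k (Fin s → k) = s := Module.finrank_fin_fun k
    -- every algebra map into End of V gives a simple module, at levels ≥ e0
    have hsimp : ∀ (n : ℕ) (ρ : Λ (e0 + n) →ₐ[k] Module.End k (Fin s → k)),
        @IsSimpleModule _ _ _ _ (MFDAux.modOfRho ρ) := by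
      intro n ρ
      refine MFDAux.simple_of_minimal_rho ρ (fun d hd => ?_)
      rw [hfrV]
      have h6 := sInf_le hd
      rw [← MFDAux.minFinDimRep_eq, hueq n] at h6
      exact h6
    -- the inverse system of iso-classes
    let X : ℕ → Type := fun n => Quotient (MFDAux.endSetoid k (Λ (e0 + n)) (Fin s → k))
    have hXfin : ∀ n, Finite (X n) := fun n => MFDAux.finite_quot (hsimple (e0 + n)) (hsimp n)
    have hXne : ∀ n, Nonempty (X n) := by
      intro n
      obtain ⟨M, i1, i2, i3, i4, hnt, hfin, hfr⟩ := hwit n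
      letI := i1; letI := i2; letI := i3; letI := i4
      haveI := hnt; haveI := hfin
      exact ⟨Quotient.mk _ (MFDAux.rhoOfModule k
        (LinearEquiv.ofFinrankEq M (Fin s → k) (by rw [hfr, hfrV])))⟩
    let Res : ∀ n, X (n + 1) → X n := fun n => Quotient.map
      (fun ρ => ρ.comp (f (e0 + n)))
      (by rintro ρ₁ ρ₂ ⟨T, hT⟩; exact ⟨T, fun a v => hT _ v⟩)
    haveI : ∀ j : ℕᵒᵖ, Finite ((CategoryTheory.Functor.ofOpSequence (C := Type) (fun n => TypeCat.ofHom (Res n))).obj j) :=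
      fun j => hXfin j.unop
    haveI : ∀ j : ℕᵒᵖ, Nonempty ((CategoryTheory.Functor.ofOpSequence (C := Type) (fun n => TypeCat.ofHom (Res n))).obj j) :=
      fun j => hXne j.unop
    obtain ⟨σ, hσ⟩ := nonempty_sections_of_finite_inverse_system
      (CategoryTheory.Functor.ofOpSequence (C := Type) (fun n => TypeCat.ofHom (Res n)))
    have hcompat : ∀ n : ℕ, Res n (σ (Opposite.op (n + 1))) = σ (Opposite.op n) := by
      intro n
      have h7 := hσ ((CategoryTheory.homOfLE (Nat.le_add_right n 1)).op)
      have h8 : (CategoryTheory.Functor.ofOpSequence (C := Type) (fun n => TypeCat.ofHom (Res n))).map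
          ((CategoryTheory.homOfLE (Nat.le_add_right n 1)).op) = TypeCat.ofHom (Res n) :=
        CategoryTheory.Functor.ofOpSequence_map_homOfLE_succ (C := Type) (X := X) (fun n => TypeCat.ofHom (Res n)) n
      rwa [h8] at h7
    -- lift the section to a compatible family of algebra maps
    have hstep : ∀ (n : ℕ) (a : {ρ : Λ (e0 + n) →ₐ[k] Module.End k (Fin s → k) //
          Quotient.mk (MFDAux.endSetoid k (Λ (e0 + n)) (Fin s → k)) ρ = σ (Opposite.op n)}),
        ∃ b : {ρ : Λ (e0 + (n + 1)) →ₐ[k] Module.End k (Fin s → k) //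
          Quotient.mk (MFDAux.endSetoid k (Λ (e0 + (n + 1))) (Fin s → k)) ρ = σ (Opposite.op (n + 1))},
        b.1.comp (f (e0 + n)) = a.1 := by
        intro n a
        obtain ⟨ρ', hρ'⟩ := Quotient.exists_rep (σ (Opposite.op (n + 1)))
        have hq : Quotient.mk (MFDAux.endSetoid k (Λ (e0 + n)) (Fin s → k)) (ρ'.comp (f (e0 + n)))
            = Quotient.mk _ a.1 := by
          rw [a.2, ← hcompat n, ← hρ']
          rfl
        obtain ⟨T, hT⟩ := Quotient.exact hq
        have hTlin : ∀ (c : k) (v : Fin s → k), T (c • v) = c • T v := by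
          intro c v
          have h1 : (c • v : Fin s → k) = (ρ'.comp (f (e0 + n))) (algebraMap k _ c) v := by
            rw [AlgHom.commutes]
            simp [Module.algebraMap_end_apply]
          have h2 : a.1 (algebraMap k _ c) (T v) = c • T v := by
            rw [AlgHom.commutes]
            simp [Module.algebraMap_end_apply]
          rw [h1, hT, h2]
        let Tl : (Fin s → k) ≃ₗ[k] (Fin s → k) :=
          { toFun := T, map_add' := T.map_add, map_smul' := hTlin,
            invFun := T.symm, left_inv := T.left_inv, right_inv := T.right_inv }
        refine Exists.intro (Subtype.mk ((Tl.conjAlgEquiv k).toAlgHom.comp ρ') ?_) ?_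
        · rw [← hρ']
          have hrel : MFDAux.endRel ρ' ((Tl.conjAlgEquiv k).toAlgHom.comp ρ') := by
            refine ⟨T, fun x v => ?_⟩
            show T (ρ' x v) = Tl ((ρ' x) (Tl.symm (Tl v)))
            rw [LinearEquiv.symm_apply_apply]
            rfl
          exact (Quotient.sound hrel).symm
        · apply AlgHom.ext
          intro x
          apply LinearMap.ext
          intro v
          show Tl.conjAlgEquiv k (ρ' (f (e0 + n) x)) v = a.1 x v
          show Tl ((ρ' (f (e0 + n) x)) (Tl.symm v)) = a.1 x v
          have h8 := hT x (Tl.symm v)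
          show T ((ρ'.comp (f (e0 + n)) x) (Tl.symm v)) = a.1 x v
          rw [h8]
          congr 1
          exact Tl.apply_symm_apply v
    obtain ⟨τF, -, hτF⟩ := MFDAux.exists_dep_seq
      (α := fun n => {ρ : Λ (e0 + n) →ₐ[k] Module.End k (Fin s → k) //
        Quotient.mk (MFDAux.endSetoid k (Λ (e0 + n)) (Fin s → k)) ρ = σ (Opposite.op n)})
      (Rel := fun n a b => b.1.comp (f (e0 + n)) = a.1)
      ⟨(σ (Opposite.op 0)).out, Quotient.out_eq _⟩ hstep
    set τ : ∀ n, Λ (e0 + n) →ₐ[k] Module.End k (Fin s → k) := fun n => (τF n).1 with hτdef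
    have hτ : ∀ n, (τ (n + 1)).comp (f (e0 + n)) = τ n := fun n => hτF n
    -- transporting along iterated transitions
    have iter_tau : ∀ (m q : ℕ) (z₁ z₂ : Λ (e0 + q)),
        iterTransition f (e0 + q) m z₁ = iterTransition f (e0 + q) m z₂ →
        τ q z₁ = τ q z₂ := by
      intro m
      induction m with
      | zero => exact fun q z₁ z₂ h => congrArg (τ q) h
      | succ m ih =>
        intro q z₁ z₂ h
        rw [MFDAux.iter_succ_left, MFDAux.iter_succ_left] at h
        have h2 := MFDAux.castΛ_inj _ h
        have h3 := ih (q + 1) (f (e0 + q) z₁) (f (e0 + q) z₂) h2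
        calc τ q z₁ = (τ (q + 1)).comp (f (e0 + q)) z₁ := by rw [hτ q]
          _ = (τ (q + 1)).comp (f (e0 + q)) z₂ := h3
          _ = τ q z₂ := by rw [hτ q]
    have pushg : ∀ (e : ℕ) (y : Λ e) (e' : ℕ), e ≤ e' → ∃ z : Λ e', g e' z = g e y := by
      intro e y e' h
      induction e', h using Nat.le_induction with
      | base => exact ⟨y, rfl⟩
      | succ e'' h ih =>
        obtain ⟨z, hz⟩ := ih
        exact ⟨f e'' z, by rw [← hz, ← hcomp e'']; rfl⟩
    have up : ∀ (n m : ℕ), n ≤ m → ∀ y : Λ (e0 + n),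
        ∃ z : Λ (e0 + m), g (e0 + m) z = g (e0 + n) y ∧ τ m z = τ n y := by
      intro n m h
      induction m, h using Nat.le_induction with
      | base => exact fun y => ⟨y, rfl, rfl⟩
      | succ m h ih =>
        intro y
        obtain ⟨z, hz1, hz2⟩ := ih y
        refine ⟨f (e0 + m) z, ?_, ?_⟩
        · rw [← hz1, ← hcomp (e0 + m)]; rfl
        · rw [← hz2, ← hτ m]; rfl
    have uniq : ∀ (n₁ n₂ : ℕ) (y₁ : Λ (e0 + n₁)) (y₂ : Λ (e0 + n₂)),
        g (e0 + n₁) y₁ = g (e0 + n₂) y₂ → τ n₁ y₁ = τ n₂ y₂ := by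
      intro n₁ n₂ y₁ y₂ h
      obtain ⟨z₁, hz₁g, hz₁τ⟩ := up n₁ (max n₁ n₂) (le_max_left _ _) y₁
      obtain ⟨z₂, hz₂g, hz₂τ⟩ := up n₂ (max n₁ n₂) (le_max_right _ _) y₂
      obtain ⟨m, hm⟩ := hker (e0 + max n₁ n₂) z₁ z₂ (by rw [hz₁g, hz₂g, h])
      rw [← hz₁τ, ← hz₂τ]
      exact iter_tau m (max n₁ n₂) z₁ z₂ hm
    have hex : ∀ x : L, ∃ (n : ℕ) (y : Λ (e0 + n)), g (e0 + n) y = x := by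
      intro x
      obtain ⟨e, y, hy⟩ := hsurj x
      obtain ⟨z, hz⟩ := pushg e y (e0 + e) (Nat.le_add_left e e0)
      exact ⟨e, z, by rw [hz, hy]⟩
    choose nx yx hx using hex
    have hspec : ∀ (x : L) (n : ℕ) (y : Λ (e0 + n)), g (e0 + n) y = x →
        τ (nx x) (yx x) = τ n y := by
      intro x n y h
      exact uniq _ _ _ _ (by rw [hx x, h])
    have key2 : ∀ (x y : L), ∃ (n : ℕ) (a b : Λ (e0 + n)),
        g (e0 + n) a = x ∧ g (e0 + n) b = y ∧
        τ (nx x) (yx x) = τ n a ∧ τ (nx y) (yx y) = τ n b := by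
      intro x y
      obtain ⟨a, ha1, ha2⟩ := up (nx x) (max (nx x) (nx y)) (le_max_left _ _) (yx x)
      obtain ⟨b, hb1, hb2⟩ := up (nx y) (max (nx x) (nx y)) (le_max_right _ _) (yx y)
      exact ⟨max (nx x) (nx y), a, b, by rw [ha1, hx x], by rw [hb1, hx y],
        ha2.symm, hb2.symm⟩
    let ρL : L →ₐ[k] Module.End k (Fin s → k) :=
      { toFun := fun x => τ (nx x) (yx x)
        map_one' := by
          show τ (nx 1) (yx 1) = 1
          rw [hspec 1 0 1 (map_one (g e0))]
          exact map_one (τ 0)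
        map_mul' := by
          intro x y
          obtain ⟨n, a, b, ha, hb, hta, htb⟩ := key2 x y
          show τ (nx (x * y)) (yx (x * y)) = τ (nx x) (yx x) * τ (nx y) (yx y)
          rw [hspec (x * y) n (a * b) (by rw [map_mul, ha, hb]), hta, htb]
          exact map_mul (τ n) a b
        map_zero' := by
          show τ (nx 0) (yx 0) = 0
          rw [hspec 0 0 0 (map_zero (g e0))]
          exact map_zero (τ 0)
        map_add' := by
          intro x y
          obtain ⟨n, a, b, ha, hb, hta, htb⟩ := key2 x y
          show τ (nx (x + y)) (yx (x + y)) = τ (nx x) (yx x) + τ (nx y) (yx y)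
          rw [hspec (x + y) n (a + b) (by rw [map_add, ha, hb]), hta, htb]
          exact map_add (τ n) a b
        commutes' := by
          intro c
          show τ (nx (algebraMap k L c)) (yx (algebraMap k L c)) = _
          rw [hspec (algebraMap k L c) 0 (algebraMap k (Λ e0) c) ((g e0).commutes c)]
          exact (τ 0).commutes c }
    have hmem : (Module.finrank k (Fin s → k) : ℕ∞) ∈ MFDAux.repSet k L := MFDAux.mem_repSet_of_rho ρL
    have hfin : minFinDimRep k L ≤ (s : ℕ∞) := by
      rw [MFDAux.minFinDimRep_eq]
      have h9 := sInf_le hmem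
      rwa [hfrV] at h9
    rw [← hs]
    exact hfin
  have main : (⨆ e, minFinDimRep k (Λ e)) = minFinDimRep k L := le_antisymm hle hhard
  refine ⟨main, ?_, ?_⟩
  · rintro ⟨M, i1, i2, i3, i4, hnt, hfin⟩
    rw [main]
    have hmem : (Module.finrank k M : ℕ∞) ∈ MFDAux.repSet k L := ⟨M, i1, i2, i3, i4, hnt, hfin, rfl⟩
    exact lt_of_le_of_lt (sInf_le hmem) (WithTop.coe_lt_top _)
  · intro hlt
    rw [main] at hlt
    have hne : (MFDAux.repSet k L).Nonempty := by
      by_contra hemp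
      rw [Set.not_nonempty_iff_eq_empty] at hemp
      rw [MFDAux.minFinDimRep_eq, hemp, sInf_empty] at hlt
      exact absurd hlt (lt_irrefl ⊤)
    obtain ⟨M, i1, i2, i3, i4, hnt, hfin, -⟩ := csInf_mem hne
    exact ⟨M, i1, i2, i3, i4, hnt, hfin⟩
end

section
/- Let R be a nonzero commutative ring of characteristic p > 0. If D(R) is a simple ring, then R is a simple D(R)-module: the only additive subgroups N ⊆ R satisfying θ(N) ⊆ N for all θ ∈ D(R) are 0 and R. -/
/-- `θ` is linear over the subring `R^{p^e}` of `p^e`-th powers. -/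
def IsFrobLinear (p : ℕ) {R : Type*} [CommRing R] (e : ℕ) (θ : R →+ R) : Prop :=
  ∀ r x : R, θ (r ^ p ^ e * x) = r ^ p ^ e * θ x

theorem IsFrobLinear.mono {p : ℕ} {R : Type*} [CommRing R] {e e' : ℕ} (h : e ≤ e')
    {θ : R →+ R} (hθ : IsFrobLinear p e θ) : IsFrobLinear p e' θ := by
  intro r x
  have hr : r ^ p ^ e' = (r ^ p ^ (e' - e)) ^ p ^ e := by
    rw [← pow_mul, ← pow_add, Nat.sub_add_cancel h]
  rw [hr]
  exact hθ _ x

/-- The ring `D(R)` of differential operators on a ring `R` of characteristic `p`: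
additive endomorphisms of `R` that are linear over `R^{p^e}` for some `e ≥ 0`. -/
def diffOps (p : ℕ) (R : Type*) [CommRing R] : Subring (AddMonoid.End R) where
  carrier := {θ | ∃ e : ℕ, IsFrobLinear p e (θ : R →+ R)}
  zero_mem' := ⟨0, fun r x => by show (0 : R) = r ^ p ^ 0 * 0; simp⟩
  one_mem' := ⟨0, fun r x => rfl⟩
  add_mem' := by
    rintro a b ⟨e₁, h₁⟩ ⟨e₂, h₂⟩
    refine ⟨max e₁ e₂, fun r x => ?_⟩
    have ha := h₁.mono (le_max_left e₁ e₂) r x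
    have hb := h₂.mono (le_max_right e₁ e₂) r x
    show a (r ^ p ^ (max e₁ e₂) * x) + b (r ^ p ^ (max e₁ e₂) * x)
        = r ^ p ^ (max e₁ e₂) * (a x + b x)
    rw [mul_add]
    exact congrArg₂ (· + ·) ha hb
  neg_mem' := by
    rintro a ⟨e, h⟩
    exact ⟨e, fun r x => by
      show -(a (r ^ p ^ e * x)) = r ^ p ^ e * -(a x)
      rw [mul_neg]
      exact congrArg Neg.neg (h r x)⟩
  mul_mem' := by
    rintro a b ⟨e₁, h₁⟩ ⟨e₂, h₂⟩
    refine ⟨max e₁ e₂, fun r x => ?_⟩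
    show a (b (r ^ p ^ (max e₁ e₂) * x)) = r ^ p ^ (max e₁ e₂) * a (b x)
    exact (congrArg a (h₂.mono (le_max_right e₁ e₂) r x)).trans (h₁.mono (le_max_left e₁ e₂) _ _)

/-!
Let `N ⊆ R` be stable under `D(R)`. The operators of `D(R)` with range in `N` form a two-sided
ideal, so by simplicity either it contains the identity, whence `N = R`, or it is zero. In the
latter case every `n ∈ N` vanishes: multiplication by `n` lies in `D(R)` and has range in `N`,
because `n * x` is the image of `n` under multiplication by `x`.
-/

namespace Subring

variable {M : Type*} [AddCommGroup M] (S : Subring (AddMonoid.End M)) {N : AddSubgroup M}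

def rangeLEIdeal (hN : ∀ θ ∈ S, ∀ x ∈ N, θ x ∈ N) : TwoSidedIdeal S :=
  TwoSidedIdeal.mk' {θ | ∀ x, (θ : AddMonoid.End M) x ∈ N}
    (fun _ => N.zero_mem)
    (fun ha hb x => N.add_mem (ha x) (hb x))
    (fun ha x => N.neg_mem (ha x))
    (fun {a _} hb x => hN a a.2 _ (hb x))
    (fun ha _ => ha _)

theorem mem_rangeLEIdeal (hN : ∀ θ ∈ S, ∀ x ∈ N, θ x ∈ N) {θ : S} :
    θ ∈ S.rangeLEIdeal hN ↔ ∀ x, (θ : AddMonoid.End M) x ∈ N :=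
  TwoSidedIdeal.mem_mk' _ _ _ _ _ _ _

theorem eq_top_or_eq_zero_of_range_le_of_isSimpleRing [IsSimpleRing S]
    (hN : ∀ θ ∈ S, ∀ x ∈ N, θ x ∈ N) :
    N = ⊤ ∨ ∀ θ ∈ S, (∀ x, θ x ∈ N) → θ = 0 := by
  rcases IsSimpleOrder.eq_bot_or_eq_top (S.rangeLEIdeal hN) with hbot | htop
  · refine Or.inr fun θ hθ hrange => ?_
    have hmem : (⟨θ, hθ⟩ : S) ∈ S.rangeLEIdeal hN := (S.mem_rangeLEIdeal hN).2 hrange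
    rw [hbot, TwoSidedIdeal.mem_bot] at hmem
    exact congrArg Subtype.val hmem
  · have hone : (1 : S) ∈ S.rangeLEIdeal hN := htop ▸ TwoSidedIdeal.mem_top _
    exact Or.inl (eq_top_iff.2 fun x _ => (S.mem_rangeLEIdeal hN).1 hone x)

end Subring

theorem mulLeft_mem_diffOps (p : ℕ) {R : Type*} [CommRing R] (r : R) :
    (AddMonoidHom.mulLeft r : AddMonoid.End R) ∈ diffOps p R :=
  ⟨0, fun _ x => mul_left_comm r _ x⟩

theorem simple_dModule_of_diffOps_simple_general
    (p : ℕ) (R : Type*) [CommRing R]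
    (hsimple : IsSimpleRing (diffOps p R)) :
    ∀ N : AddSubgroup R, (∀ θ ∈ diffOps p R, ∀ x ∈ N, θ x ∈ N) → N = ⊥ ∨ N = ⊤ := by
  intro N hN
  refine ((diffOps p R).eq_top_or_eq_zero_of_range_le_of_isSimpleRing hN).symm.imp
    (fun hzero => (AddSubgroup.eq_bot_iff_forall N).2 fun n hn => ?_) id
  have hmul : ∀ x, n * x ∈ N := fun x =>
    mul_comm x n ▸ hN _ (mulLeft_mem_diffOps p x) n hn
  have hmulLeft := hzero _ (mulLeft_mem_diffOps p n) hmul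
  calc n = n * 1 := (mul_one n).symm
    _ = 0 := DFunLike.congr_fun hmulLeft 1

/-- **Proposition.** If `R` is a nonzero commutative ring of characteristic `p > 0` and the
ring `D(R)` of differential operators is simple, then `R` is a simple `D(R)`-module: the only
additive subgroups of `R` stable under every differential operator are `0` and `R`. -/
theorem simple_dModule_of_diffOps_simple
    (p : ℕ) (hp : p.Prime) (R : Type*) [CommRing R] [Nontrivial R] [CharP R p]
    (hsimple : IsSimpleRing (diffOps p R)) :
    ∀ N : AddSubgroup R, (∀ θ ∈ diffOps p R, ∀ x ∈ N, θ x ∈ N) → N = ⊥ ∨ N = ⊤ :=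
  simple_dModule_of_diffOps_simple_general p R hsimple
end

section
/- Let k be a perfect field of characteristic p > 0, let G be a finite group whose order is not divisible by p, let W be a finite-dimensional k-linear representation of G, and let S = Sym(W) be the symmetric algebra with the induced G-action by graded k-algebra automorphisms. Fix e ≥ 0, set q = p^e, and let S_+^{[q]} denote the ideal of S generated by the q-th powers of the elements of the augmentation ideal S_+ = ⊕_{d>0} S_d. Then there is a G-equivariant isomorphism of S^q-modules (S/S_+^{[q]}) ⊗_k S^q ≅ S, where S^q = {s^q : s ∈ S} is a G-stable subring of S, G acts diagonally on the tensor product, and the S^q-module structure on the tensor product is through the right factor. -/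
open MvPolynomial TensorProduct

section Setup

variable (p : ℕ) [Fact p.Prime] (k : Type) [Field k] [CharP k p] [PerfectRing k p] (n e : ℕ)

/-- The augmentation ideal `S₊ = ⊕_{d > 0} S_d` of the polynomial ring
`S = Sym(W) = k[X₁, …, Xₙ]`: the polynomials with zero constant term. -/
noncomputable def sPlus : Ideal (MvPolynomial (Fin n) k) :=
  RingHom.ker (constantCoeff : MvPolynomial (Fin n) k →+* k)

/-- The ideal `S₊^{[q]}` generated by the `q`-th powers of the elements of `S₊`, `q = p^e`. -/
noncomputable def sPlusPow : Ideal (MvPolynomial (Fin n) k) :=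
  Ideal.span {x | ∃ s ∈ sPlus k n, s ^ p ^ e = x}

/-- The subring `S^q = {s^q : s ∈ S}` of `q`-th powers, `q = p^e`. -/
noncomputable def sQ : Subring (MvPolynomial (Fin n) k) :=
  (iterateFrobenius (MvPolynomial (Fin n) k) p e).range

/-- Since `k` is perfect, `k ⊆ S^q`, making `S^q` a `k`-algebra. -/
noncomputable def sQAlgebra : Algebra k ↥(sQ p k n e) :=
  RingHom.toAlgebra <| RingHom.codRestrict
    (algebraMap k (MvPolynomial (Fin n) k)) (sQ p k n e)
    (fun c => ⟨C ((iterateFrobeniusEquiv k p e).symm c), by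
      rw [iterateFrobenius_def, ← map_pow, ← iterateFrobenius_def,
        ← iterateFrobeniusEquiv_apply, RingEquiv.apply_symm_apply]
      rfl⟩)

/-- Ring automorphisms of `S` preserve the subring `S^q` of `q`-th powers. -/
theorem sq_stable (g : MvPolynomial (Fin n) k ≃ₐ[k] MvPolynomial (Fin n) k)
    {t : MvPolynomial (Fin n) k} (ht : t ∈ sQ p k n e) : g t ∈ sQ p k n e := by
  obtain ⟨s, rfl⟩ := ht
  exact ⟨g s, by rw [iterateFrobenius_def, iterateFrobenius_def, map_pow]⟩

end Setup

attribute [local instance] sQAlgebra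

set_option synthInstance.maxHeartbeats 1000000
set_option maxHeartbeats 1000000
set_option linter.unusedSectionVars false

section Aux

open scoped Classical

variable (p : ℕ) [Fact p.Prime] (k : Type) [Field k] [CharP k p] [PerfectRing k p] (n e : ℕ)

local notation "S" => MvPolynomial (Fin n) k

theorem FrobAux.hq0 : 0 < p ^ e := pow_pos (Nat.Prime.pos Fact.out) e

def FrobAux.bigIdeal : Ideal S where
  carrier := {f | ∀ d ∈ f.support, ∃ i, p ^ e ≤ d i}
  add_mem' := by
    intro a b ha hb d hd
    rcases Finset.mem_union.mp (MvPolynomial.support_add hd) with h | h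
    · exact ha d h
    · exact hb d h
  zero_mem' := by intro d hd; simp at hd
  smul_mem' := by
    intro c f hf d hd
    rw [smul_eq_mul] at hd
    obtain ⟨a, ha, b, hb, rfl⟩ := Finset.mem_add.mp (MvPolynomial.support_mul _ _ hd)
    obtain ⟨i, hi⟩ := hf b hb
    exact ⟨i, le_trans hi (by simp)⟩

theorem FrobAux.mem_bigIdeal_iff {f : S} :
    f ∈ FrobAux.bigIdeal p k n e ↔ ∀ d ∈ f.support, ∃ i, p ^ e ≤ d i := Iff.rfl

theorem FrobAux.monomial_mem_span_pow {m : ℕ} {d : Fin n →₀ ℕ} (c : k) {i : Fin n}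
    (hi : m ≤ d i) :
    monomial d c ∈ Ideal.span (Set.range fun j => (X j : S) ^ m) := by
  have hd : d = (d - Finsupp.single i m) + Finsupp.single i m := by
    ext j
    by_cases h : j = i
    · subst h; simp [Nat.sub_add_cancel hi]
    · simp [Finsupp.single_apply, Ne.symm h, h]
  rw [hd, ← mul_one c, ← monomial_mul, ← X_pow_eq_monomial]
  exact Ideal.mul_mem_left _ _ (Ideal.subset_span ⟨i, rfl⟩)

theorem FrobAux.X_mem_sPlus (i : Fin n) : (X i : S) ∈ sPlus k n := by
  simp [sPlus, RingHom.mem_ker]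

theorem FrobAux.sPlus_le_span :
    sPlus k n ≤ Ideal.span (Set.range fun j => (X j : S) ^ 1) := by
  intro f hf
  rw [← support_sum_monomial_coeff f]
  refine Submodule.sum_mem _ fun d hd => ?_
  have hd0 : d ≠ 0 := by
    rintro rfl
    exact (MvPolynomial.mem_support_iff.mp hd) hf
  obtain ⟨i, hi⟩ := Finsupp.ne_iff.mp hd0
  exact FrobAux.monomial_mem_span_pow (k := k) (n := n) _ (Nat.one_le_iff_ne_zero.mpr (by simpa using hi))

theorem FrobAux.span_pow_le_sPlusPow :
    Ideal.span (Set.range fun j => (X j : S) ^ p ^ e) ≤ sPlusPow p k n e := by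
  rw [Ideal.span_le]
  rintro _ ⟨j, rfl⟩
  exact Ideal.subset_span ⟨X j, FrobAux.X_mem_sPlus (k := k) (n := n) j, rfl⟩

theorem FrobAux.big_monomial_mem {d : Fin n →₀ ℕ} (c : k) {i : Fin n} (hi : p ^ e ≤ d i) :
    monomial d c ∈ sPlusPow p k n e :=
  FrobAux.span_pow_le_sPlusPow p k n e (FrobAux.monomial_mem_span_pow (k := k) (n := n) c hi)

theorem FrobAux.sPlusPow_le_span_pow :
    sPlusPow p k n e ≤ Ideal.span (Set.range fun j => (X j : S) ^ p ^ e) := by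
  rw [sPlusPow, Ideal.span_le]
  rintro _ ⟨s, hs, rfl⟩
  have hs' := FrobAux.sPlus_le_span (k := k) (n := n) hs
  clear hs
  induction hs' using Submodule.span_induction  with
  | mem x hx =>
    obtain ⟨j, rfl⟩ := hx
    exact Ideal.subset_span ⟨j, by rw [← pow_mul, one_mul]⟩
  | zero => rw [zero_pow (pow_ne_zero e (Nat.Prime.ne_zero Fact.out))]; exact Ideal.zero_mem _
  | add x y hx hy ihx ihy =>
    rw [add_pow_char_pow]
    exact Ideal.add_mem _ ihx ihy
  | smul a x hx ih =>
    rw [smul_eq_mul, mul_pow]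
    exact Ideal.mul_mem_left _ _ ih

theorem FrobAux.sPlusPow_le_bigIdeal :
    sPlusPow p k n e ≤ FrobAux.bigIdeal p k n e := by
  refine le_trans (FrobAux.sPlusPow_le_span_pow p k n e) ?_
  rw [Ideal.span_le]
  rintro _ ⟨j, rfl⟩
  simp only [X_pow_eq_monomial]
  intro d hd
  rw [MvPolynomial.support_monomial] at hd
  simp only [if_neg (one_ne_zero (α := k)), Finset.mem_singleton] at hd
  subst hd
  exact ⟨j, by simp⟩

noncomputable def FrobAux.trunc : S →ₗ[k] S :=
  Module.Basis.constr (basisMonomials (Fin n) k) k fun d =>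
    if ∀ i, d i < p ^ e then monomial d 1 else 0

theorem FrobAux.trunc_monomial (d : Fin n →₀ ℕ) (c : k) :
    FrobAux.trunc p k n e (monomial d c)
      = if ∀ i, d i < p ^ e then monomial d c else 0 := by
  have h1 : (monomial d c : S) = c • monomial d 1 := by rw [smul_monomial, smul_eq_mul, mul_one]
  have hb : ((basisMonomials (Fin n) k) d : S) = monomial d 1 := by
    rw [coe_basisMonomials]
  rw [h1, map_smul, ← hb, FrobAux.trunc, Module.Basis.constr_basis]
  rw [hb]
  split
  · rw [smul_monomial, smul_eq_mul, mul_one]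
  · rw [smul_zero]

theorem FrobAux.sub_trunc_mem (f : S) : f - FrobAux.trunc p k n e f ∈ sPlusPow p k n e := by
  have key : f - FrobAux.trunc p k n e f
      = ∑ d ∈ f.support, ((monomial d (coeff d f) : S)
          - FrobAux.trunc p k n e (monomial d (coeff d f))) := by
    rw [Finset.sum_sub_distrib, ← map_sum, support_sum_monomial_coeff]
  rw [key]
  refine Submodule.sum_mem _ fun d _ => ?_
  rw [FrobAux.trunc_monomial]
  split
  · rw [sub_self]; exact Ideal.zero_mem _
  · rw [sub_zero]
    next h =>
      push_neg at h
      obtain ⟨i, hi⟩ := h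
      exact FrobAux.big_monomial_mem p k n e _ hi

theorem FrobAux.trunc_eq_zero_of_big {f : S} (hf : f ∈ FrobAux.bigIdeal p k n e) :
    FrobAux.trunc p k n e f = 0 := by
  conv_lhs => rw [← support_sum_monomial_coeff f]
  rw [map_sum]
  refine Finset.sum_eq_zero fun d hd => ?_
  rw [FrobAux.trunc_monomial]
  obtain ⟨i, hi⟩ := hf d hd
  rw [if_neg (by push_neg; exact ⟨i, hi⟩)]

theorem FrobAux.homog_degree {f : S} {m : ℕ} (hf : f.IsHomogeneous m)
    {d : Fin n →₀ ℕ} (hd : d ∈ f.support) : d.degree = m := by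
  rw [Finsupp.degree_eq_weight_one]
  exact hf (MvPolynomial.mem_support_iff.mp hd)

theorem FrobAux.trunc_homog {f : S} {m : ℕ} (hf : f.IsHomogeneous m) :
    (FrobAux.trunc p k n e f).IsHomogeneous m := by
  rw [← mem_homogeneousSubmodule,
    show f = ∑ d ∈ f.support, (monomial d (coeff d f) : S) from (support_sum_monomial_coeff f).symm,
    map_sum]
  refine Submodule.sum_mem _ fun d hd => ?_
  rw [FrobAux.trunc_monomial]
  split
  · exact isHomogeneous_monomial _ (FrobAux.homog_degree (k := k) (n := n) hf hd)
  · exact Submodule.zero_mem _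

theorem FrobAux.aeq_monomial (g : S ≃ₐ[k] S) (d : Fin n →₀ ℕ) (c : k) :
    g (monomial d c) = C c * ∏ i ∈ d.support, (g (X i)) ^ d i := by
  have hC : g (C c) = C c := by
    have h := g.commutes c
    rwa [MvPolynomial.algebraMap_eq] at h
  rw [monomial_eq, map_mul, hC, Finsupp.prod, map_prod]
  simp [map_pow]

theorem FrobAux.aeq_homog (g : S ≃ₐ[k] S)
    (hg : ∀ i, g (X i) ∈ Submodule.span k (Set.range (X : Fin n → S)))
    {m : ℕ} {f : S} (hf : f.IsHomogeneous m) : (g f).IsHomogeneous m := by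
  have gX1 : ∀ i, (g (X i)).IsHomogeneous 1 := fun i => by
    have hle : Submodule.span k (Set.range (X : Fin n → S))
        ≤ homogeneousSubmodule (Fin n) k 1 :=
      Submodule.span_le.mpr (by rintro _ ⟨j, rfl⟩; exact isHomogeneous_X k j)
    exact hle (hg i)
  rw [← mem_homogeneousSubmodule,
    show f = ∑ d ∈ f.support, (monomial d (coeff d f) : S) from (support_sum_monomial_coeff f).symm,
    map_sum]
  refine Submodule.sum_mem _ fun d hd => ?_
  rw [FrobAux.aeq_monomial]
  rw [mem_homogeneousSubmodule]
  have h1 : (∏ i ∈ d.support, (g (X i)) ^ d i).IsHomogeneous (∑ i ∈ d.support, 1 * d i) :=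
    IsHomogeneous.prod _ _ _ (fun i _ => (gX1 i).pow (d i))
  have h2 : (∑ i ∈ d.support, 1 * d i) = m := by
    have := FrobAux.homog_degree (k := k) (n := n) hf hd
    simpa [Finsupp.degree_apply] using this
  exact h2 ▸ h1.C_mul (coeff d f)

theorem FrobAux.aeq_sPlus (g : S ≃ₐ[k] S)
    (hg : ∀ i, g (X i) ∈ Submodule.span k (Set.range (X : Fin n → S)))
    {s : S} (hs : s ∈ sPlus k n) : g s ∈ sPlus k n := by
  have hX : ∀ i, g (X i) ∈ sPlus k n := fun i => by
    have hle : Submodule.span k (Set.range (X : Fin n → S))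
        ≤ (sPlus k n).restrictScalars k :=
      Submodule.span_le.mpr (by rintro _ ⟨j, rfl⟩; exact FrobAux.X_mem_sPlus (k := k) (n := n) j)
    exact hle (hg i)
  have hs0 : coeff 0 s = 0 := by
    have := hs
    rwa [sPlus, RingHom.mem_ker, MvPolynomial.constantCoeff_eq] at this
  rw [show s = ∑ d ∈ s.support, (monomial d (coeff d s) : S) from (support_sum_monomial_coeff s).symm,
    map_sum]
  refine Submodule.sum_mem _ fun d hd => ?_
  rw [FrobAux.aeq_monomial]
  have hd0 : d ≠ 0 := by
    rintro rfl
    exact (MvPolynomial.mem_support_iff.mp hd) hs0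
  obtain ⟨i, hi⟩ := Finsupp.ne_iff.mp hd0
  have hine : d i ≠ 0 := by simpa using hi
  have hisup : i ∈ d.support := Finsupp.mem_support_iff.mpr hine
  rw [← Finset.mul_prod_erase _ _ hisup]
  exact Ideal.mul_mem_left _ _ (Ideal.mul_mem_right _ _
    (Ideal.pow_mem_of_mem _ (hX i) _ (Nat.pos_of_ne_zero hine)))

theorem FrobAux.aeq_sPlusPow (g : S ≃ₐ[k] S)
    (hg : ∀ i, g (X i) ∈ Submodule.span k (Set.range (X : Fin n → S)))
    {f : S} (hf : f ∈ sPlusPow p k n e) : g f ∈ sPlusPow p k n e := by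
  rw [sPlusPow] at hf
  induction hf using Submodule.span_induction with
  | mem x hx =>
    obtain ⟨s, hs, rfl⟩ := hx
    rw [map_pow]
    exact Ideal.subset_span ⟨g s, FrobAux.aeq_sPlus (k := k) (n := n) g hg hs, rfl⟩
  | zero => rw [map_zero]; exact Ideal.zero_mem _
  | add x y hx hy ihx ihy => rw [map_add]; exact Ideal.add_mem _ ihx ihy
  | smul a x hx ih =>
    rw [smul_eq_mul, map_mul]
    exact Ideal.mul_mem_left _ _ ih

theorem FrobAux.sq_smul_val (c : k) (t : ↥(sQ p k n e)) :
    ((c • t : ↥(sQ p k n e)) : S) = C c * (t : S) := by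
  rw [Algebra.smul_def]
  rfl

noncomputable def FrobAux.incl : ↥(sQ p k n e) →ₗ[k] S where
  toFun := Subtype.val
  map_add' _ _ := rfl
  map_smul' c t := by
    rw [RingHom.id_apply, MvPolynomial.smul_eq_C_mul]
    exact FrobAux.sq_smul_val p k n e c t

@[simp] theorem FrobAux.incl_apply (t : ↥(sQ p k n e)) : FrobAux.incl p k n e t = (t : S) := rfl

noncomputable def FrobAux.qpow (b : Fin n →₀ ℕ) : ↥(sQ p k n e) :=
  ⟨(monomial b 1 : S) ^ p ^ e, ⟨monomial b 1, by rw [iterateFrobenius_def]⟩⟩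

theorem FrobAux.qpow_val (b : Fin n →₀ ℕ) :
    ((FrobAux.qpow p k n e b : ↥(sQ p k n e)) : S) = monomial (p ^ e • b) (1 : k) := by
  show ((monomial b 1 : S) ^ p ^ e) = _
  rw [monomial_pow, one_pow]

theorem FrobAux.span_qpow :
    Submodule.span k (Set.range (FrobAux.qpow p k n e)) = ⊤ := by
  rw [eq_top_iff]
  rintro ⟨y, hy⟩ -
  have key : ∀ s : S, ∀ h : s ^ p ^ e ∈ sQ p k n e,
      (⟨s ^ p ^ e, h⟩ : ↥(sQ p k n e)) ∈ Submodule.span k (Set.range (FrobAux.qpow p k n e)) := by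
    intro s
    induction s using MvPolynomial.induction_on' with
    | monomial d c =>
      intro h
      have hv : (⟨(monomial d c : S) ^ p ^ e, h⟩ : ↥(sQ p k n e))
          = (c ^ p ^ e) • FrobAux.qpow p k n e d := by
        apply Subtype.ext
        rw [FrobAux.sq_smul_val, FrobAux.qpow_val]
        show (monomial d c : S) ^ p ^ e = _
        rw [monomial_pow, C_mul_monomial, mul_one]
      rw [hv]
      exact Submodule.smul_mem _ _ (Submodule.subset_span ⟨d, rfl⟩)
    | add f g ihf ihg =>
      intro h
      have hf : f ^ p ^ e ∈ sQ p k n e := ⟨f, by rw [iterateFrobenius_def]⟩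
      have hg : g ^ p ^ e ∈ sQ p k n e := ⟨g, by rw [iterateFrobenius_def]⟩
      have hv : (⟨(f + g) ^ p ^ e, h⟩ : ↥(sQ p k n e))
          = ⟨f ^ p ^ e, hf⟩ + ⟨g ^ p ^ e, hg⟩ := by
        apply Subtype.ext
        show (f + g) ^ p ^ e = f ^ p ^ e + g ^ p ^ e
        exact add_pow_char_pow f g p e
      rw [hv]
      exact Submodule.add_mem _ (ihf hf) (ihg hg)
  obtain ⟨s, hs⟩ := hy
  have hs' : s ^ p ^ e = y := by rwa [iterateFrobenius_def] at hs
  subst hs'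
  exact key s _

/-- The bilinear multiplication-with-projection map. -/
noncomputable def FrobAux.bil (P : S →ₗ[k] S) : S →ₗ[k] ↥(sQ p k n e) →ₗ[k] S :=
  ((LinearMap.mul k S).comp P).compl₂ (FrobAux.incl p k n e)

theorem FrobAux.bil_apply (P : S →ₗ[k] S) (x : S) (t : ↥(sQ p k n e)) :
    FrobAux.bil p k n e P x t = P x * (t : S) := rfl

/-- The induced map on the quotient. -/
noncomputable def FrobAux.bilq (P : S →ₗ[k] S) (hP : ∀ f ∈ sPlusPow p k n e, P f = 0) :
    (S ⧸ sPlusPow p k n e) →ₗ[k] ↥(sQ p k n e) →ₗ[k] S :=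
  (Submodule.liftQ ((sPlusPow p k n e).restrictScalars k) (FrobAux.bil p k n e P)
      (fun f hf => by
        rw [LinearMap.mem_ker]
        apply LinearMap.ext fun t => ?_
        rw [FrobAux.bil_apply, hP f hf, zero_mul, LinearMap.zero_apply])).comp
    (Submodule.Quotient.restrictScalarsEquiv k (sPlusPow p k n e)).symm.toLinearMap

theorem FrobAux.bilq_mk (P : S →ₗ[k] S) (hP : ∀ f ∈ sPlusPow p k n e, P f = 0) (x : S)
    (t : ↥(sQ p k n e)) :
    FrobAux.bilq p k n e P hP (Ideal.Quotient.mk (sPlusPow p k n e) x) t = P x * (t : S) := by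
  rw [FrobAux.bilq]
  rw [LinearMap.comp_apply, LinearEquiv.coe_coe, ← Ideal.Quotient.mk_eq_mk,
    Submodule.Quotient.restrictScalarsEquiv_symm_mk, Submodule.liftQ_apply]
  rfl

/-- The candidate isomorphism as a linear map, for a given projection `P`. -/
noncomputable def FrobAux.phi (P : S →ₗ[k] S) (hP : ∀ f ∈ sPlusPow p k n e, P f = 0) :
    ((S ⧸ sPlusPow p k n e) ⊗[k] ↥(sQ p k n e)) →ₗ[k] S :=
  TensorProduct.lift (FrobAux.bilq p k n e P hP)

theorem FrobAux.phi_tmul (P : S →ₗ[k] S) (hP : ∀ f ∈ sPlusPow p k n e, P f = 0) (x : S)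
    (t : ↥(sQ p k n e)) :
    FrobAux.phi p k n e P hP (Ideal.Quotient.mk (sPlusPow p k n e) x ⊗ₜ[k] t)
      = P x * (t : S) := by
  rw [FrobAux.phi, TensorProduct.lift.tmul, FrobAux.bilq_mk]

noncomputable def FrobAux.dmod (d : Fin n →₀ ℕ) : Fin n →₀ ℕ :=
  d.mapRange (· % p ^ e) (Nat.zero_mod _)

noncomputable def FrobAux.ddiv (d : Fin n →₀ ℕ) : Fin n →₀ ℕ :=
  d.mapRange (· / p ^ e) (Nat.zero_div _)

theorem FrobAux.dmod_apply (d : Fin n →₀ ℕ) (i : Fin n) :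
    FrobAux.dmod p n e d i = d i % p ^ e := Finsupp.mapRange_apply

theorem FrobAux.ddiv_apply (d : Fin n →₀ ℕ) (i : Fin n) :
    FrobAux.ddiv p n e d i = d i / p ^ e := Finsupp.mapRange_apply

theorem FrobAux.dmod_add_qdiv (d : Fin n →₀ ℕ) :
    FrobAux.dmod p n e d + p ^ e • FrobAux.ddiv p n e d = d := by
  ext i
  rw [Finsupp.add_apply, Finsupp.smul_apply, FrobAux.dmod_apply, FrobAux.ddiv_apply,
    smul_eq_mul, Nat.mod_add_div]

theorem FrobAux.dmod_small (d : Fin n →₀ ℕ) (i : Fin n) :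
    FrobAux.dmod p n e d i < p ^ e := by
  rw [FrobAux.dmod_apply]
  exact Nat.mod_lt _ (FrobAux.hq0 p e)

theorem FrobAux.dmod_add_mul (d b : Fin n →₀ ℕ) :
    FrobAux.dmod p n e (d + p ^ e • b) = FrobAux.dmod p n e d := by
  ext i
  rw [FrobAux.dmod_apply, FrobAux.dmod_apply, Finsupp.add_apply, Finsupp.smul_apply,
    smul_eq_mul, Nat.add_mul_mod_self_left]

theorem FrobAux.dmod_of_small {d : Fin n →₀ ℕ} (h : ∀ i, d i < p ^ e) :
    FrobAux.dmod p n e d = d := by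
  ext i
  rw [FrobAux.dmod_apply, Nat.mod_eq_of_lt (h i)]

theorem FrobAux.ddiv_add_mul {d : Fin n →₀ ℕ} (h : ∀ i, d i < p ^ e) (b : Fin n →₀ ℕ) :
    FrobAux.ddiv p n e (d + p ^ e • b) = b := by
  ext i
  rw [FrobAux.ddiv_apply, Finsupp.add_apply, Finsupp.smul_apply, smul_eq_mul,
    Nat.add_mul_div_left _ _ (FrobAux.hq0 p e), Nat.div_eq_of_lt (h i), zero_add]

/-- The inverse map, sending the monomial `X^d` to `[X^{d mod q}] ⊗ X^{q ⌊d/q⌋}`. -/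
noncomputable def FrobAux.psi : S →ₗ[k] ((S ⧸ sPlusPow p k n e) ⊗[k] ↥(sQ p k n e)) :=
  Module.Basis.constr (basisMonomials (Fin n) k) k fun d =>
    Ideal.Quotient.mk (sPlusPow p k n e) (monomial (FrobAux.dmod p n e d) 1) ⊗ₜ[k]
      FrobAux.qpow p k n e (FrobAux.ddiv p n e d)

theorem FrobAux.psi_monomial (d : Fin n →₀ ℕ) (c : k) :
    FrobAux.psi p k n e (monomial d c)
      = c • (Ideal.Quotient.mk (sPlusPow p k n e) (monomial (FrobAux.dmod p n e d) 1) ⊗ₜ[k]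
          FrobAux.qpow p k n e (FrobAux.ddiv p n e d)) := by
  have h1 : (monomial d c : S) = c • monomial d 1 := by rw [smul_monomial, smul_eq_mul, mul_one]
  have hb : ((basisMonomials (Fin n) k) d : S) = monomial d 1 := by rw [coe_basisMonomials]
  rw [h1, map_smul, ← hb, FrobAux.psi, Module.Basis.constr_basis]

theorem FrobAux.htrunc0 : ∀ f ∈ sPlusPow p k n e, FrobAux.trunc p k n e f = 0 :=
  fun f hf => FrobAux.trunc_eq_zero_of_big p k n e (FrobAux.sPlusPow_le_bigIdeal p k n e hf)

theorem FrobAux.phi0_psi :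
    (FrobAux.phi p k n e (FrobAux.trunc p k n e) (FrobAux.htrunc0 p k n e)).comp
      (FrobAux.psi p k n e) = LinearMap.id := by
  apply Module.Basis.ext (basisMonomials (Fin n) k)
  intro d
  have hb : ((basisMonomials (Fin n) k) d : S) = monomial d 1 := by rw [coe_basisMonomials]
  rw [hb, LinearMap.comp_apply, FrobAux.psi_monomial, map_smul, FrobAux.phi_tmul,
    FrobAux.trunc_monomial, if_pos (FrobAux.dmod_small p n e d), FrobAux.qpow_val,
    monomial_mul, mul_one, FrobAux.dmod_add_qdiv, LinearMap.id_apply, smul_monomial,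
    smul_eq_mul, mul_one]

theorem FrobAux.ext_T {M : Type} [AddCommGroup M] [Module k M]
    (F G : ((S ⧸ sPlusPow p k n e) ⊗[k] ↥(sQ p k n e)) →ₗ[k] M)
    (h : ∀ (d b : Fin n →₀ ℕ) (c : k),
      F (Ideal.Quotient.mk (sPlusPow p k n e) (monomial d c) ⊗ₜ[k] FrobAux.qpow p k n e b)
        = G (Ideal.Quotient.mk (sPlusPow p k n e) (monomial d c) ⊗ₜ[k] FrobAux.qpow p k n e b)) :
    F = G := by
  apply TensorProduct.ext'
  intro xq t
  obtain ⟨x, rfl⟩ := Ideal.Quotient.mk_surjective xq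
  have ht : t ∈ Submodule.span k (Set.range (FrobAux.qpow p k n e)) := by
    rw [FrobAux.span_qpow]; trivial
  induction ht using Submodule.span_induction with
  | mem tt htt =>
    obtain ⟨b, rfl⟩ := htt
    induction x using MvPolynomial.induction_on' with
    | monomial d c => exact h d b c
    | add f g ihf ihg =>
      rw [map_add, TensorProduct.add_tmul, map_add, map_add, ihf, ihg]
  | zero => rw [TensorProduct.tmul_zero, map_zero, map_zero]
  | add t1 t2 ht1 ht2 ih1 ih2 =>
    rw [TensorProduct.tmul_add, map_add, map_add, ih1, ih2]
  | smul c tt htt ih => rw [TensorProduct.tmul_smul, map_smul, map_smul, ih]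

theorem FrobAux.psi_phi0 :
    (FrobAux.psi p k n e).comp
        (FrobAux.phi p k n e (FrobAux.trunc p k n e) (FrobAux.htrunc0 p k n e))
      = LinearMap.id := by
  apply FrobAux.ext_T
  intro d b c
  rw [LinearMap.comp_apply, FrobAux.phi_tmul, FrobAux.trunc_monomial, LinearMap.id_apply]
  split
  next hsmall =>
    rw [FrobAux.qpow_val, monomial_mul, mul_one, FrobAux.psi_monomial,
      FrobAux.dmod_add_mul, FrobAux.ddiv_add_mul p n e hsmall, FrobAux.dmod_of_small p n e hsmall]
    have h1 : (monomial d c : S) = c • monomial d 1 := by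
      rw [smul_monomial, smul_eq_mul, mul_one]
    have h2 : Ideal.Quotient.mk (sPlusPow p k n e) (monomial d c)
        = c • Ideal.Quotient.mk (sPlusPow p k n e) (monomial d 1) := by
      rw [← Ideal.Quotient.mkₐ_eq_mk k, h1, map_smul]
    rw [h2, TensorProduct.smul_tmul']
  next hsmall =>
    push_neg at hsmall
    obtain ⟨i, hi⟩ := hsmall
    rw [zero_mul, map_zero,
      Ideal.Quotient.eq_zero_iff_mem.mpr (FrobAux.big_monomial_mem p k n e c hi),
      TensorProduct.zero_tmul]

theorem FrobAux.degree_univ (d : Fin n →₀ ℕ) : d.degree = ∑ i, d i := by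
  rw [Finsupp.degree]
  exact Finset.sum_subset (Finset.subset_univ _)
    (fun i _ hi => Finsupp.notMem_support_iff.mp hi)

theorem FrobAux.dmod_degree_le {d : Fin n →₀ ℕ} {i : Fin n} (hi : p ^ e ≤ d i) :
    (FrobAux.dmod p n e d).degree + p ^ e ≤ d.degree := by
  rw [FrobAux.degree_univ, FrobAux.degree_univ]
  have h1 : ∑ j, FrobAux.dmod p n e d j
      = FrobAux.dmod p n e d i + ∑ j ∈ Finset.univ.erase i, FrobAux.dmod p n e d j :=
    (Finset.add_sum_erase _ _ (Finset.mem_univ i)).symm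
  have h2 : ∑ j, d j = d i + ∑ j ∈ Finset.univ.erase i, d j :=
    (Finset.add_sum_erase _ _ (Finset.mem_univ i)).symm
  rw [h1, h2]
  have h3 : FrobAux.dmod p n e d i + p ^ e ≤ d i := by
    rw [FrobAux.dmod_apply]
    calc d i % p ^ e + p ^ e ≤ d i % p ^ e + p ^ e * (d i / p ^ e) := by
          have : 1 ≤ d i / p ^ e := (Nat.one_le_div_iff (FrobAux.hq0 p e)).mpr hi
          have := Nat.mul_le_mul_left (p ^ e) this
          omega
      _ = d i := Nat.mod_add_div _ _
  have h4 : ∑ j ∈ Finset.univ.erase i, FrobAux.dmod p n e d j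
      ≤ ∑ j ∈ Finset.univ.erase i, d j :=
    Finset.sum_le_sum fun j _ => by rw [FrobAux.dmod_apply]; exact Nat.mod_le _ _
  omega

theorem FrobAux.dmod_degree_bound (d : Fin n →₀ ℕ) :
    (FrobAux.dmod p n e d).degree ≤ n * (p ^ e - 1) := by
  rw [FrobAux.degree_univ]
  calc ∑ i, FrobAux.dmod p n e d i ≤ ∑ _i : Fin n, (p ^ e - 1) :=
        Finset.sum_le_sum fun i _ => by
          rw [FrobAux.dmod_apply]
          exact Nat.le_sub_one_of_lt (Nat.mod_lt _ (FrobAux.hq0 p e))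
    _ = n * (p ^ e - 1) := by rw [Finset.sum_const, Finset.card_univ, Fintype.card_fin,
          smul_eq_mul]

/-- The filtration by the "small part degree". -/
noncomputable def FrobAux.fspan (j : ℕ) : Submodule k S :=
  Submodule.span k ((fun d => (monomial d (1 : k) : S)) '' {d | (FrobAux.dmod p n e d).degree < j})

theorem FrobAux.fspan_mono {i j : ℕ} (h : i ≤ j) :
    FrobAux.fspan p k n e i ≤ FrobAux.fspan p k n e j :=
  Submodule.span_mono (Set.image_mono fun d hd => lt_of_lt_of_le hd h)

theorem FrobAux.fspan_zero : FrobAux.fspan p k n e 0 = ⊥ := by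
  rw [FrobAux.fspan]
  convert Submodule.span_empty
  simp

theorem FrobAux.fspan_top : FrobAux.fspan p k n e (n * (p ^ e - 1) + 1) = ⊤ := by
  rw [eq_top_iff]
  intro f _
  rw [show f = ∑ d ∈ f.support, (monomial d (coeff d f) : S) from
    (support_sum_monomial_coeff f).symm]
  refine Submodule.sum_mem _ fun d _ => ?_
  have h1 : (monomial d (coeff d f) : S) = coeff d f • monomial d 1 := by
    rw [smul_monomial, smul_eq_mul, mul_one]
  rw [h1]
  exact Submodule.smul_mem _ _ (Submodule.subset_span
    ⟨d, Nat.lt_succ_of_le (FrobAux.dmod_degree_bound p n e d), rfl⟩)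

theorem FrobAux.mul_big_homog_mem {h : S} {m : ℕ}
    (hbig : h ∈ FrobAux.bigIdeal p k n e) (hhom : h.IsHomogeneous m) (b : Fin n →₀ ℕ) :
    h * monomial (p ^ e • b) 1 ∈ FrobAux.fspan p k n e (m + 1 - p ^ e) := by
  rw [show h = ∑ d ∈ h.support, (monomial d (coeff d h) : S) from
    (support_sum_monomial_coeff h).symm, Finset.sum_mul]
  refine Submodule.sum_mem _ fun d hd => ?_
  rw [monomial_mul, mul_one]
  have h1 : (monomial (d + p ^ e • b) (coeff d h) : S)
      = coeff d h • monomial (d + p ^ e • b) 1 := by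
    rw [smul_monomial, smul_eq_mul, mul_one]
  rw [h1]
  refine Submodule.smul_mem _ _ (Submodule.subset_span ⟨d + p ^ e • b, ?_, rfl⟩)
  show (FrobAux.dmod p n e (d + p ^ e • b)).degree < m + 1 - p ^ e
  rw [FrobAux.dmod_add_mul]
  obtain ⟨i, hi⟩ := hbig d hd
  have h2 := FrobAux.dmod_degree_le p n e hi
  have h3 : d.degree = m := FrobAux.homog_degree (k := k) (n := n) hhom hd
  omega

noncomputable def FrobAux.Dmap (P : S →ₗ[k] S)
    (hP2 : ∀ f ∈ sPlusPow p k n e, P f = 0) : S →ₗ[k] S :=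
  (FrobAux.phi p k n e P hP2).comp (FrobAux.psi p k n e) - LinearMap.id

theorem FrobAux.D_monomial_mem (P : S →ₗ[k] S)
    (hP2 : ∀ f ∈ sPlusPow p k n e, P f = 0)
    (hP1 : ∀ f, f - P f ∈ sPlusPow p k n e)
    (hP3 : ∀ (m : ℕ) (f : S), f.IsHomogeneous m → (P f).IsHomogeneous m)
    (d : Fin n →₀ ℕ) (c : k) :
    FrobAux.Dmap p k n e P hP2 (monomial d c)
      ∈ FrobAux.fspan p k n e ((FrobAux.dmod p n e d).degree + 1 - p ^ e) := by
  set r := FrobAux.dmod p n e d with hr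
  set b := FrobAux.ddiv p n e d with hb
  have hid : (monomial d c : S) = c • ((monomial r 1 : S) * monomial (p ^ e • b) 1) := by
    rw [monomial_mul, mul_one, hr, hb, FrobAux.dmod_add_qdiv, smul_monomial, smul_eq_mul,
      mul_one]
  have hval : FrobAux.Dmap p k n e P hP2
      (monomial d c) = c • ((P (monomial r 1) - monomial r 1) * monomial (p ^ e • b) 1) := by
    rw [FrobAux.Dmap, LinearMap.sub_apply, LinearMap.comp_apply, FrobAux.psi_monomial, map_smul,
      FrobAux.phi_tmul, FrobAux.qpow_val, LinearMap.id_apply, hid, sub_mul, smul_sub]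
  rw [hval]
  refine Submodule.smul_mem _ _ (FrobAux.mul_big_homog_mem p k n e ?_ ?_ b)
  · have h1 : monomial r 1 - P (monomial r 1) ∈ sPlusPow p k n e := hP1 _
    have h2 := FrobAux.sPlusPow_le_bigIdeal p k n e h1
    have h3 : P (monomial r 1) - monomial r 1 = -(monomial r 1 - P (monomial r 1)) := by ring
    rw [h3]
    exact Submodule.neg_mem _ h2
  · rw [← mem_homogeneousSubmodule]
    refine Submodule.sub_mem _ ?_ ?_
    · exact hP3 _ _ (isHomogeneous_monomial _ rfl)
    · exact isHomogeneous_monomial _ rfl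

theorem FrobAux.D_fspan (P : S →ₗ[k] S)
    (hP2 : ∀ f ∈ sPlusPow p k n e, P f = 0)
    (hP1 : ∀ f, f - P f ∈ sPlusPow p k n e)
    (hP3 : ∀ (m : ℕ) (f : S), f.IsHomogeneous m → (P f).IsHomogeneous m)
    {j : ℕ} {f : S} (hf : f ∈ FrobAux.fspan p k n e j) :
    FrobAux.Dmap p k n e P hP2 f ∈ FrobAux.fspan p k n e (j - p ^ e) := by
  induction hf using Submodule.span_induction with
  | mem x hx =>
    obtain ⟨d, hd, rfl⟩ := hx
    exact FrobAux.fspan_mono p k n e (Nat.sub_le_sub_right hd (p ^ e))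
      (FrobAux.D_monomial_mem p k n e P hP2 hP1 hP3 d 1)
  | zero => rw [map_zero]; exact Submodule.zero_mem _
  | add x y hx hy ihx ihy => rw [map_add]; exact Submodule.add_mem _ ihx ihy
  | smul a x hx ih => rw [map_smul]; exact Submodule.smul_mem _ _ ih

theorem FrobAux.D_pow_mem (P : S →ₗ[k] S)
    (hP2 : ∀ f ∈ sPlusPow p k n e, P f = 0)
    (hP1 : ∀ f, f - P f ∈ sPlusPow p k n e)
    (hP3 : ∀ (m : ℕ) (f : S), f.IsHomogeneous m → (P f).IsHomogeneous m)
    (m : ℕ) {j : ℕ} {f : S} (hf : f ∈ FrobAux.fspan p k n e j) :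
    ((FrobAux.Dmap p k n e P hP2 ^ m) f) ∈ FrobAux.fspan p k n e (j - m * p ^ e) := by
  induction m generalizing j f with
  | zero => rw [pow_zero]; simpa using hf
  | succ m ih =>
    rw [pow_succ, Module.End.mul_apply]
    have h1 := FrobAux.D_fspan p k n e P hP2 hP1 hP3 hf
    have h2 := ih h1
    have h3 : j - p ^ e - m * p ^ e = j - (m + 1) * p ^ e := by
      rw [Nat.sub_sub, add_one_mul, Nat.add_comm]
    rwa [h3] at h2

theorem FrobAux.D_nilpotent (P : S →ₗ[k] S)
    (hP2 : ∀ f ∈ sPlusPow p k n e, P f = 0)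
    (hP1 : ∀ f, f - P f ∈ sPlusPow p k n e)
    (hP3 : ∀ (m : ℕ) (f : S), f.IsHomogeneous m → (P f).IsHomogeneous m) :
    FrobAux.Dmap p k n e P hP2 ^ (n + 1) = 0 := by
  apply LinearMap.ext
  intro f
  have hf : f ∈ FrobAux.fspan p k n e (n * (p ^ e - 1) + 1) := by
    rw [FrobAux.fspan_top]; trivial
  have h1 := FrobAux.D_pow_mem p k n e P hP2 hP1 hP3 (n + 1) hf
  have h2 : n * (p ^ e - 1) + 1 - (n + 1) * p ^ e = 0 := by
    have hq := FrobAux.hq0 p e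
    have h3 : n * (p ^ e - 1) + 1 ≤ (n + 1) * p ^ e := by
      have h4 : n * (p ^ e - 1) ≤ n * p ^ e := Nat.mul_le_mul_left n (Nat.sub_le _ _)
      have h5 : (n + 1) * p ^ e = n * p ^ e + p ^ e := by ring
      omega
    omega
  rw [h2, FrobAux.fspan_zero] at h1
  simpa using h1

theorem FrobAux.exists_equiv (P : S →ₗ[k] S)
    (hP2 : ∀ f ∈ sPlusPow p k n e, P f = 0)
    (hP1 : ∀ f, f - P f ∈ sPlusPow p k n e)
    (hP3 : ∀ (m : ℕ) (f : S), f.IsHomogeneous m → (P f).IsHomogeneous m) :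
    ∃ φ : ((S ⧸ sPlusPow p k n e) ⊗[k] ↥(sQ p k n e)) ≃ₗ[k] S,
      ∀ (x : S) (t : ↥(sQ p k n e)),
        φ (Ideal.Quotient.mk (sPlusPow p k n e) x ⊗ₜ[k] t) = P x * (t : S) := by
  classical
  set phi0 := FrobAux.phi p k n e (FrobAux.trunc p k n e) (FrobAux.htrunc0 p k n e) with hphi0
  set u : Module.End k S := (FrobAux.phi p k n e P hP2).comp (FrobAux.psi p k n e) with hu
  have huD : u = FrobAux.Dmap p k n e P hP2 + 1 := by
    rw [FrobAux.Dmap, ← hu, show (LinearMap.id : Module.End k S) = 1 from rfl, sub_add_cancel]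
  have hDnil : IsNilpotent (FrobAux.Dmap p k n e P hP2) :=
    ⟨n + 1, FrobAux.D_nilpotent p k n e P hP2 hP1 hP3⟩
  have huUnit : IsUnit u := huD ▸ hDnil.isUnit_add_one
  have hubij : Function.Bijective u := (Module.End.isUnit_iff u).mp huUnit
  have hphi0bij : Function.Bijective phi0 := by
    rw [Function.bijective_iff_has_inverse]
    refine ⟨FrobAux.psi p k n e, fun z => ?_, fun f => ?_⟩
    · have h9 := LinearMap.congr_fun (FrobAux.psi_phi0 p k n e) z
      rw [LinearMap.comp_apply] at h9
      exact h9
    · have h9 := LinearMap.congr_fun (FrobAux.phi0_psi p k n e) f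
      rw [LinearMap.comp_apply] at h9
      exact h9
  have hphiu : ∀ z, FrobAux.phi p k n e P hP2 z = u (phi0 z) := by
    intro z
    show _ = FrobAux.phi p k n e P hP2 (FrobAux.psi p k n e (phi0 z))
    have h9 := LinearMap.congr_fun (FrobAux.psi_phi0 p k n e) z
    rw [LinearMap.comp_apply] at h9
    rw [hphi0, h9]
    rfl
  have hbij : Function.Bijective (FrobAux.phi p k n e P hP2) := by
    have : ⇑(FrobAux.phi p k n e P hP2) = ⇑u ∘ ⇑phi0 := by
      funext z
      exact hphiu z
    rw [this]
    exact hubij.comp hphi0bij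
  refine ⟨LinearEquiv.ofBijective (FrobAux.phi p k n e P hP2) hbij, fun x t => ?_⟩
  rw [LinearEquiv.ofBijective_apply, FrobAux.phi_tmul]

end Aux

/-- **Proposition.** Let `k` be a perfect field of characteristic `p > 0`, `G` a finite group
of order prime to `p` acting `k`-linearly on a finite dimensional space `W` (with basis
indexed by `Fin n`), and let `S = Sym(W) = k[X₁, …, Xₙ]` with the induced action by graded
algebra automorphisms.  For `q = p^e` there is a `G`-equivariant isomorphism of
`S^q`-modules `(S/S₊^{[q]}) ⊗_k S^q ≅ S` (where `G` acts diagonally on the tensor product and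
the `S^q`-module structure is through the right factor). -/
theorem exists_equivariant_frobenius_decomposition
    (p : ℕ) [Fact p.Prime] (k : Type) [Field k] [CharP k p] [PerfectRing k p]
    (G : Type) [Group G] [Finite G] (hG : ¬ p ∣ Nat.card G)
    (n e : ℕ)
    (ρ : G →* (MvPolynomial (Fin n) k ≃ₐ[k] MvPolynomial (Fin n) k))
    -- the action is induced by a linear action on `W = span(X₁, …, Xₙ)`
    (hlin : ∀ (g : G) (i : Fin n), ρ g (X i) ∈
      Submodule.span k (Set.range (X : Fin n → MvPolynomial (Fin n) k))) :
    ∃ φ : ((MvPolynomial (Fin n) k ⧸ sPlusPow p k n e) ⊗[k] ↥(sQ p k n e)) ≃ₗ[k]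
        MvPolynomial (Fin n) k,
      -- `φ` is `S^q`-linear for the `S^q`-action through the right tensor factor
      (∀ (t : ↥(sQ p k n e))
        (z : (MvPolynomial (Fin n) k ⧸ sPlusPow p k n e) ⊗[k] ↥(sQ p k n e)),
        φ (((1 : MvPolynomial (Fin n) k ⧸ sPlusPow p k n e) ⊗ₜ[k] t) * z) = (t : MvPolynomial (Fin n) k) * φ z) ∧
      -- `φ` is `G`-equivariant (checked on pure tensors, `G` acting diagonally)
      (∀ (g : G) (x : MvPolynomial (Fin n) k) (t : ↥(sQ p k n e)),
        φ ((Ideal.Quotient.mk (sPlusPow p k n e) (ρ g x)) ⊗ₜ[k]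
            (⟨ρ g (t : MvPolynomial (Fin n) k), sq_stable p k n e (ρ g) t.2⟩ : ↥(sQ p k n e)))
          = ρ g (φ ((Ideal.Quotient.mk (sPlusPow p k n e) x) ⊗ₜ[k] t))) := by
  classical
  haveI : Fintype G := Fintype.ofFinite G
  have hcard : (Nat.card G : k) ≠ 0 := fun h => hG ((CharP.cast_eq_zero_iff k p _).mp h)
  set c0 : k := (Nat.card G : k)⁻¹ with hc0
  set P : MvPolynomial (Fin n) k →ₗ[k] MvPolynomial (Fin n) k :=
    c0 • ∑ g : G, ((ρ g).toLinearMap.comp ((FrobAux.trunc p k n e).comp (ρ g⁻¹).toLinearMap))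
    with hP
  have hPval : ∀ f, P f = c0 • ∑ g : G, ρ g (FrobAux.trunc p k n e (ρ g⁻¹ f)) := by
    intro f
    rw [hP]
    simp [LinearMap.sum_apply, LinearMap.smul_apply]
  have hgg : ∀ (g : G) (x : MvPolynomial (Fin n) k), ρ g (ρ g⁻¹ x) = x := by
    intro g x
    have h1 : ρ g * ρ g⁻¹ = 1 := by rw [← map_mul, mul_inv_cancel, map_one]
    calc ρ g (ρ g⁻¹ x) = (ρ g * ρ g⁻¹) x := rfl
      _ = x := by rw [h1]; rfl
  have hgg' : ∀ (g : G) (x : MvPolynomial (Fin n) k), ρ g⁻¹ (ρ g x) = x := by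
    intro g x
    have := hgg g⁻¹ x
    rwa [inv_inv] at this
  have hP2 : ∀ f ∈ sPlusPow p k n e, P f = 0 := by
    intro f hf
    rw [hPval]
    have hz : ∀ g : G, ρ g (FrobAux.trunc p k n e (ρ g⁻¹ f)) = 0 := by
      intro g
      rw [FrobAux.trunc_eq_zero_of_big p k n e
        (FrobAux.sPlusPow_le_bigIdeal p k n e
          (FrobAux.aeq_sPlusPow p k n e (ρ g⁻¹) (hlin g⁻¹) hf)), map_zero]
    rw [Finset.sum_congr rfl fun g _ => hz g, Finset.sum_const, smul_zero, smul_zero]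
  have havg : ∀ f : MvPolynomial (Fin n) k, f = c0 • ∑ _g : G, f := by
    intro f
    rw [Finset.sum_const, Finset.card_univ, ← Nat.card_eq_fintype_card,
      ← Nat.cast_smul_eq_nsmul k, smul_smul, hc0, inv_mul_cancel₀ hcard, one_smul]
  have hP1 : ∀ f, f - P f ∈ sPlusPow p k n e := by
    intro f
    have heq : f - P f
        = c0 • ∑ g : G, (f - ρ g (FrobAux.trunc p k n e (ρ g⁻¹ f))) := by
      rw [Finset.sum_sub_distrib, smul_sub, ← hPval f, ← havg f]
    rw [heq]
    refine Submodule.smul_mem ((sPlusPow p k n e).restrictScalars k) c0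
      (Submodule.sum_mem _ fun g _ => ?_)
    have h2 : f - ρ g (FrobAux.trunc p k n e (ρ g⁻¹ f))
        = ρ g (ρ g⁻¹ f - FrobAux.trunc p k n e (ρ g⁻¹ f)) := by
      rw [map_sub, hgg]
    rw [h2]
    exact FrobAux.aeq_sPlusPow p k n e (ρ g) (hlin g) (FrobAux.sub_trunc_mem p k n e _)
  have hP3 : ∀ (m : ℕ) (f : MvPolynomial (Fin n) k),
      f.IsHomogeneous m → (P f).IsHomogeneous m := by
    intro m f hf
    rw [← mem_homogeneousSubmodule, hPval]
    refine Submodule.smul_mem _ _ (Submodule.sum_mem _ fun g _ => ?_)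
    rw [mem_homogeneousSubmodule]
    exact FrobAux.aeq_homog (k := k) (n := n) (ρ g) (hlin g)
      (FrobAux.trunc_homog p k n e (FrobAux.aeq_homog (k := k) (n := n) (ρ g⁻¹) (hlin g⁻¹) hf))
  have hP4 : ∀ (g : G) (x : MvPolynomial (Fin n) k), P (ρ g x) = ρ g (P x) := by
    intro g0 x
    rw [hPval, hPval, map_smul, map_sum]
    congr 1
    refine Fintype.sum_equiv (Equiv.mulLeft g0⁻¹) _ _ fun i => ?_
    show ρ i (FrobAux.trunc p k n e (ρ i⁻¹ (ρ g0 x)))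
      = ρ g0 (ρ (g0⁻¹ * i) (FrobAux.trunc p k n e (ρ (g0⁻¹ * i)⁻¹ x)))
    have e1 : ρ ((g0⁻¹ * i)⁻¹) x = ρ i⁻¹ (ρ g0 x) := by
      rw [mul_inv_rev, inv_inv, map_mul]
      rfl
    have e2 : ∀ y, ρ g0 (ρ (g0⁻¹ * i) y) = ρ i y := by
      intro y
      calc ρ g0 (ρ (g0⁻¹ * i) y) = (ρ g0 * ρ (g0⁻¹ * i)) y := rfl
        _ = ρ i y := by rw [← map_mul, mul_inv_cancel_left]
    rw [e1, e2]
  obtain ⟨φ, hφ⟩ := FrobAux.exists_equiv p k n e P hP2 hP1 hP3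
  refine ⟨φ, ?_, ?_⟩
  · intro t z
    have hmul : ∀ w : (MvPolynomial (Fin n) k ⧸ sPlusPow p k n e) ⊗[k] ↥(sQ p k n e),
        ((1 : MvPolynomial (Fin n) k ⧸ sPlusPow p k n e) ⊗ₜ[k] t) * w
          = Algebra.TensorProduct.mul
            ((1 : MvPolynomial (Fin n) k ⧸ sPlusPow p k n e) ⊗ₜ[k] t) w := fun _ => rfl
    induction z using TensorProduct.induction_on with
    | zero => rw [hmul, map_zero, map_zero, mul_zero]
    | tmul xq s =>
      obtain ⟨x, rfl⟩ := Ideal.Quotient.mk_surjective xq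
      rw [Algebra.TensorProduct.tmul_mul_tmul, one_mul, hφ, hφ, MulMemClass.coe_mul]
      ring
    | add z1 z2 ih1 ih2 =>
      rw [hmul, map_add, map_add, ← hmul, ← hmul, ih1, ih2, map_add, mul_add]
  · intro g x t
    rw [hφ, hφ, hP4, map_mul]
end
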